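/- arXiv:1007.3852 — 11 statements merged into one kernel-verified Lean document; each statement's English description precedes it below -/
import Mathlib

section
/- For any real number x with 0 < x < 1 and any positive integer n, the sum over k from 0 to n-1 of ((x)_k (1-x)_k / ((1)_k)^2) · 1/(n-k) equals ((x)_n (1-x)_n / ((1)_n)^2) · (∑_{k=0}^{n-1} 1/(x+k) + ∑_{k=0}^{n-1} 1/(1-x+k)). -/
/-!
Write `a k = (x)_k (1-x)_k / (k!)²` and `S n = ∑_{k<n} a k / (n - k)`. Since
`(k+1)² a (k+1) = (x+k)(1-x+k) a k`, the sum `∑_{k<n} a k ((n+1)²/(n+1-k) - (x+n)(1-x+n)/(n-k))`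
telescopes, with primitive `a k k² / (n+1-k)`, to `-n² a n`. Hence
`(n+1)² S (n+1) = (x+n)(1-x+n) S n + (2n+1) a n`, and the right-hand side of the identity satisfies
the same recurrence because `1/(x+n) + 1/(1-x+n) = (2n+1) / ((x+n)(1-x+n))`.
-/

open Finset Polynomial

variable {K : Type*} [Field K] [CharZero K]

/-- The `k`-th coefficient of the hypergeometric series `₂F₁(x, 1 - x; 1; t)`. -/
noncomputable def hypergeomCoeff (x : K) (k : ℕ) : K :=
  (ascPochhammer K k).eval x * (ascPochhammer K k).eval (1 - x)
    / ((ascPochhammer K k).eval 1) ^ 2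

theorem sq_mul_hypergeomCoeff_succ (x : K) (k : ℕ) :
    ((k : K) + 1) ^ 2 * hypergeomCoeff x (k + 1) = (x + k) * (1 - x + k) * hypergeomCoeff x k := by
  have hfact : (k.factorial : K) ≠ 0 := by exact_mod_cast k.factorial_ne_zero
  have hk : 1 + (k : K) ≠ 0 := by rw [add_comm]; exact Nat.cast_add_one_ne_zero k
  simp only [hypergeomCoeff, ascPochhammer_succ_right, eval_mul, eval_add, eval_X, eval_natCast,
    ascPochhammer_eval_one]
  field_simp
  ring

theorem sum_hypergeomCoeff_telescope (x : K) (n : ℕ) :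
    ∑ k ∈ range n, hypergeomCoeff x k *
        (((n : K) + 1) ^ 2 / ((n : K) + 1 - k) - (x + n) * (1 - x + n) / ((n : K) - k)) =
      -((n : K) ^ 2 * hypergeomCoeff x n) := by
  set G : ℕ → K := fun k => hypergeomCoeff x k * (k : K) ^ 2 / ((n : K) + 1 - k)
  have hstep : ∀ k ∈ range n, hypergeomCoeff x k *
      (((n : K) + 1) ^ 2 / ((n : K) + 1 - k) - (x + n) * (1 - x + n) / ((n : K) - k)) =
        G k - G (k + 1) := by
    intro k hk
    have hnk : (n : K) - k ≠ 0 := sub_ne_zero.mpr (by exact_mod_cast (mem_range.mp hk).ne')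
    have hnk' : (n : K) + 1 - k ≠ 0 := by
      rw [← Nat.cast_succ, sub_ne_zero, Ne, Nat.cast_inj]; have := mem_range.mp hk; omega
    have hG : G (k + 1) = (x + k) * (1 - x + k) * hypergeomCoeff x k / ((n : K) - k) := by
      simp only [G, Nat.cast_succ, ← sq_mul_hypergeomCoeff_succ]
      rw [mul_comm, add_sub_add_right_eq_sub]
    rw [hG]
    simp only [G]
    field_simp
    ring
  rw [sum_congr rfl hstep, sum_range_sub']
  simp [G, mul_comm]

theorem sq_mul_sum_range_succ_div (x : K) (n : ℕ) :
    ((n : K) + 1) ^ 2 * ∑ k ∈ range (n + 1), hypergeomCoeff x k * (1 / (((n + 1 : ℕ) : K) - k)) =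
      (x + n) * (1 - x + n) * ∑ k ∈ range n, hypergeomCoeff x k * (1 / ((n : K) - k)) +
        (2 * n + 1) * hypergeomCoeff x n := by
  calc ((n : K) + 1) ^ 2 * ∑ k ∈ range (n + 1), hypergeomCoeff x k * (1 / (((n + 1 : ℕ) : K) - k))
      = ∑ k ∈ range n, ((x + n) * (1 - x + n) * (hypergeomCoeff x k * (1 / ((n : K) - k))) +
          hypergeomCoeff x k *
            (((n : K) + 1) ^ 2 / ((n : K) + 1 - k) - (x + n) * (1 - x + n) / ((n : K) - k))) +
          ((n : K) + 1) ^ 2 * hypergeomCoeff x n := by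
        rw [sum_range_succ, mul_add, mul_sum]
        push_cast
        congr 1
        · exact sum_congr rfl fun k _ => by ring
        · simp
    _ = _ := by
        rw [sum_add_distrib, ← mul_sum, sum_hypergeomCoeff_telescope]
        ring

theorem sum_hypergeomCoeff_div_sub (x : K) (n : ℕ) (hx : ∀ k < n, x + k ≠ 0)
    (hx' : ∀ k < n, 1 - x + k ≠ 0) :
    ∑ k ∈ range n, hypergeomCoeff x k * (1 / ((n : K) - k)) =
      hypergeomCoeff x n * ((∑ k ∈ range n, 1 / (x + k)) + ∑ k ∈ range n, 1 / (1 - x + k)) := by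
  induction n with
  | zero => simp
  | succ n ih =>
    have hn : ((n : K) + 1) ^ 2 ≠ 0 := pow_ne_zero 2 (Nat.cast_add_one_ne_zero n)
    apply mul_left_cancel₀ hn
    rw [sq_mul_sum_range_succ_div, ih (fun k hk => hx k (by omega)) (fun k hk => hx' k (by omega)),
      ← mul_assoc (((n : K) + 1) ^ 2), sq_mul_hypergeomCoeff_succ, sum_range_succ, sum_range_succ]
    have h1 := hx n n.lt_succ_self
    have h2 := hx' n n.lt_succ_self
    field_simp
    ring

theorem stmt_0_general (x : ℝ) (hx0 : 0 < x) (hx1 : x < 1) (n : ℕ) :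
    ∑ k ∈ Finset.range n,
        (ascPochhammer ℝ k).eval x * (ascPochhammer ℝ k).eval (1 - x)
          / ((ascPochhammer ℝ k).eval 1) ^ 2 * (1 / ((n : ℝ) - k)) =
      (ascPochhammer ℝ n).eval x * (ascPochhammer ℝ n).eval (1 - x)
          / ((ascPochhammer ℝ n).eval 1) ^ 2 *
        ((∑ k ∈ Finset.range n, 1 / (x + k)) + ∑ k ∈ Finset.range n, 1 / (1 - x + k)) :=
  sum_hypergeomCoeff_div_sub x n (fun _ _ => by positivity)
    (fun _ _ => by have : 0 < 1 - x := sub_pos.mpr hx1; positivity)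

theorem stmt_0 (x : ℝ) (hx0 : 0 < x) (hx1 : x < 1) (n : ℕ) (hn : 0 < n) :
    ∑ k ∈ Finset.range n,
        (ascPochhammer ℝ k).eval x * (ascPochhammer ℝ k).eval (1 - x)
          / ((ascPochhammer ℝ k).eval 1) ^ 2 * (1 / ((n : ℝ) - k)) =
      (ascPochhammer ℝ n).eval x * (ascPochhammer ℝ n).eval (1 - x)
          / ((ascPochhammer ℝ n).eval 1) ^ 2 *
        ((∑ k ∈ Finset.range n, 1 / (x + k)) + ∑ k ∈ Finset.range n, 1 / (1 - x + k)) :=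
  stmt_0_general x hx0 hx1 n
end

section
/- For any positive integer n and any real (or rationally-valued, away from poles) z, the identity ∑_{k=1}^{n} ((-1)^k/(z+k)) · C(n,k) · C(n+k,k) = (1/z) · ((1-z)_n/(1+z)_n − 1) holds, where z is not a negative integer in {−1,...,−n} and z ≠ 0. -/
/-!
Partial fractions. The polynomial `(1 - z)_n` has degree `n`, and `z (1 + z)_n = (z)_{n+1}` has
the simple roots `0, -1, …, -n`, so Lagrange interpolation at these nodes gives
`(1 - z)_n / (z)_{n+1} = ∑_{k=0}^n c_k / (z + k)` with
`c_k = (1 + k)_n / ∏_{j ≠ k} (j - k) = (-1)^k (n + k)! / (k!² (n - k)!)`,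
which is `(-1)^k C(n,k) C(n+k,k)`. The term `k = 0` is `1 / z`.
-/

open Finset Polynomial Lagrange Nat

theorem ascPochhammer_eval_ne_zero {R : Type*} [CommRing R] [IsDomain R] {n : ℕ} {z : R}
    (hz : ∀ k < n, z + k ≠ 0) : (ascPochhammer R n).eval z ≠ 0 := by
  rw [ne_eq, ascPochhammer_eval_eq_zero_iff]
  rintro ⟨k, hk, hkz⟩
  exact hz k hk (by rw [hkz, add_neg_cancel])

theorem ascPochhammer_eq_nodal {R : Type*} [CommRing R] (n : ℕ) :
    ascPochhammer R n = nodal (range n) (fun i => -(i : R)) := by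
  induction n with
  | zero => simp
  | succ n ih =>
    rw [ascPochhammer_succ_right, ih, nodal, nodal, prod_range_succ]
    simp [sub_eq_add_neg]

theorem nodal_range_succ_erase {R : Type*} [CommRing R] [IsDomain R] {n k : ℕ} (hk : k ≤ n) :
    nodal ((range (n + 1)).erase k) (fun i => -(i : R)) =
      ascPochhammer R k * (ascPochhammer R (n - k)).comp (X + ((k + 1 : ℕ) : R[X])) := by
  refine mul_left_cancel₀ (a := X + (k : R[X])) (by simpa using X_add_C_ne_zero (k : R)) ?_
  have hsplit := ascPochhammer_mul (S := R) k (n - k + 1)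
  rw [show k + (n - k + 1) = n + 1 by omega, ascPochhammer_succ_left, mul_comp, X_comp,
    comp_assoc, add_comp, X_comp, one_comp, ascPochhammer_eq_nodal (n + 1),
    nodal_eq_mul_nodal_erase (mem_range.2 (Nat.lt_succ_of_le hk))] at hsplit
  simp only [map_neg, sub_neg_eq_add, map_natCast] at hsplit
  rw [Nat.succ_eq_add_one] at hsplit
  rw [← hsplit, Nat.cast_add, Nat.cast_one, ← add_assoc]
  ring

theorem nodalWeight_range_neg {F : Type*} [Field F] {n k : ℕ} (hk : k ≤ n) :
    nodalWeight (range (n + 1)) (fun i => -(i : F)) k = ((-1) ^ k * k ! * (n - k)! : F)⁻¹ := by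
  rw [nodalWeight_eq_eval_nodal_erase_inv, nodal_range_succ_erase hk, eval_mul, eval_comp,
    ascPochhammer_eval_neg_eq_descPochhammer, descPochhammer_eval_eq_descFactorial,
    Nat.descFactorial_self]
  simp [mul_assoc]

theorem eval_div_eval_ascPochhammer_eq_sum {F : Type*} [Field F] [CharZero F] {n : ℕ} {p : F[X]}
    (hp : p.natDegree ≤ n) {z : F} (hz : ∀ k ≤ n, z + k ≠ 0) :
    p.eval z / (ascPochhammer F (n + 1)).eval z =
      ∑ k ∈ range (n + 1), (-1) ^ k * p.eval (-(k : F)) / (k ! * (n - k)! * (z + k)) := by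
  have hinj : Set.InjOn (fun i : ℕ => -(i : F)) (range (n + 1)) := fun a _ b _ h => by
    simpa using h
  have hdeg : p.degree < #(range (n + 1)) := by
    rw [card_range]
    exact (degree_le_of_natDegree_le hp).trans_lt (by exact_mod_cast Nat.lt_succ_self n)
  have hnode : ∀ k ∈ range (n + 1), z ≠ -(k : F) := fun k hk h =>
    hz k (Nat.lt_succ_iff.1 (mem_range.1 hk)) (by rw [h, neg_add_cancel])
  have hpoch : (ascPochhammer F (n + 1)).eval z ≠ 0 :=
    ascPochhammer_eval_ne_zero fun k hk => hz k (Nat.lt_succ_iff.1 hk)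
  have hexp := congrArg (eval z) (eq_interpolate hinj hdeg)
  rw [eval_interpolate_not_at_node _ hnode, ← ascPochhammer_eq_nodal] at hexp
  rw [hexp, mul_div_cancel_left₀ _ hpoch]
  refine sum_congr rfl fun k hk => ?_
  rw [nodalWeight_range_neg (Nat.lt_succ_iff.1 (mem_range.1 hk)), sub_neg_eq_add]
  rw [mul_inv, mul_inv, ← inv_pow, inv_neg_one, div_eq_mul_inv, mul_inv, mul_inv]
  ring

theorem Nat.choose_mul_add_choose_mul_factorial {n k : ℕ} (hk : k ≤ n) :
    n.choose k * (n + k).choose k * (k ! * k ! * (n - k)!) = (n + k)! := by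
  have h := Nat.choose_mul_factorial_mul_factorial (Nat.le_add_left k n)
  rw [Nat.add_sub_cancel] at h
  calc _ = n.choose k * k ! * (n - k)! * ((n + k).choose k * k !) := by ring
    _ = (n + k).choose k * k ! * n ! := by
      rw [Nat.choose_mul_factorial_mul_factorial hk, mul_comm]
    _ = (n + k)! := h

theorem sum_range_choose_mul_choose_div {F : Type*} [Field F] [CharZero F] (n : ℕ) {z : F}
    (hz : ∀ k ≤ n, z + k ≠ 0) :
    ∑ k ∈ range (n + 1), (-1) ^ k * n.choose k * (n + k).choose k / (z + k) =
      (ascPochhammer F n).eval (1 - z) / (ascPochhammer F (n + 1)).eval z := by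
  have hdeg : ((ascPochhammer F n).comp (1 - X)).natDegree ≤ n := by
    have h1X : (1 - X : F[X]).natDegree = 1 := by compute_degree!
    rw [natDegree_comp, ascPochhammer_natDegree, h1X, mul_one]
  have hexp := eval_div_eval_ascPochhammer_eq_sum hdeg hz
  rw [eval_comp, eval_sub, eval_one, eval_X] at hexp
  rw [hexp]
  refine sum_congr rfl fun k hk => ?_
  have hkn : k ≤ n := Nat.lt_succ_iff.1 (mem_range.1 hk)
  have hfac := factorial_mul_ascPochhammer F k n
  have hchoose : (n.choose k * (n + k).choose k * (k ! * k ! * (n - k)!) : F) = (n + k)! := by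
    exact_mod_cast Nat.choose_mul_add_choose_mul_factorial hkn
  rw [eval_comp, eval_sub, eval_one, eval_X, sub_neg_eq_add, add_comm (1 : F)]
  have hzk : z + k ≠ 0 := hz k hkn
  field_simp
  rw [eq_div_iff (by simp [Nat.factorial_ne_zero])]
  refine mul_left_cancel₀ (Nat.cast_ne_zero.2 k.factorial_ne_zero : (k ! : F) ≠ 0) ?_
  rw [hfac, add_comm k n, ← hchoose]
  ring

theorem stmt_1_general (n : ℕ) (z : ℝ) (hz : z ≠ 0)
    (hzj : ∀ j : ℕ, 1 ≤ j → j ≤ n → z ≠ -(j : ℝ)) :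
    ∑ k ∈ Finset.Icc 1 n,
        (-1 : ℝ) ^ k / (z + k) * (n.choose k) * ((n + k).choose k) =
      1 / z * ((ascPochhammer ℝ n).eval (1 - z) / (ascPochhammer ℝ n).eval (1 + z) - 1) := by
  have hzk : ∀ k ≤ n, z + k ≠ 0 := by
    rintro (_ | k) hk
    · simpa using hz
    · exact fun h => hzj (k + 1) le_add_self hk (eq_neg_of_add_eq_zero_left h)
  have hpoch : (ascPochhammer ℝ n).eval (1 + z) ≠ 0 :=
    ascPochhammer_eval_ne_zero fun k hk => by
      simpa [add_comm, add_left_comm] using hzk (k + 1) hk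
  have hsum := sum_range_choose_mul_choose_div n hzk
  rw [range_eq_Ico, sum_eq_sum_Ico_succ_bot (Nat.succ_pos n), zero_add,
    Nat.succ_eq_add_one, Ico_add_one_right_eq_Icc,
    ascPochhammer_succ_left, eval_mul, eval_comp] at hsum
  simp only [eval_add, eval_X, eval_one, pow_zero, Nat.choose_zero_right, Nat.cast_zero,
    Nat.cast_one, add_zero, one_mul] at hsum
  rw [add_comm z 1] at hsum
  calc _ = ∑ k ∈ Icc 1 n, (-1) ^ k * n.choose k * (n + k).choose k / (z + k) :=
        sum_congr rfl fun k _ => by ring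
    _ = _ := by
      rw [eq_sub_of_add_eq' hsum]
      field_simp

theorem stmt_1 (n : ℕ) (hn : 0 < n) (z : ℝ) (hz : z ≠ 0)
    (hzj : ∀ j : ℕ, 1 ≤ j → j ≤ n → z ≠ -(j : ℝ)) :
    ∑ k ∈ Finset.Icc 1 n,
        (-1 : ℝ) ^ k / (z + k) * (n.choose k) * ((n + k).choose k) =
      1 / z * ((ascPochhammer ℝ n).eval (1 - z) / (ascPochhammer ℝ n).eval (1 + z) - 1) :=
  stmt_1_general n z hz hzj
end

section
/- For any positive integer n, ∑_{k=0}^{n} (-1)^k · C(n,k) · C(n+k,k) = (-1)^n. -/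
/-!
The sum is the value at `1` of the shifted Legendre polynomial `Pₙ`; the symmetry
`Pₙ(x) = (-1)ⁿ Pₙ(1 - x)` reduces it to `(-1)ⁿ` times the constant coefficient `Pₙ(0) = 1`.
-/

open Polynomial

theorem Polynomial.eval_shiftedLegendre (n : ℕ) (x : ℤ) :
    (shiftedLegendre n).eval x =
      ∑ k ∈ Finset.range (n + 1), (-1 : ℤ) ^ k * n.choose k * (n + k).choose n * x ^ k := by
  simp [shiftedLegendre, eval_finsetSum]

theorem Polynomial.eval_one_shiftedLegendre (n : ℕ) : (shiftedLegendre n).eval 1 = (-1) ^ n := by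
  have h := shiftedLegendre_eval_symm n (1 : ℤ)
  rw [sub_self, coe_aeval_eq_eval, coe_aeval_eq_eval, ← coeff_zero_eq_eval_zero,
    coeff_shiftedLegendre] at h
  simpa using h

theorem stmt_2_general (n : ℕ) :
    ∑ k ∈ Finset.range (n + 1),
        (-1 : ℤ) ^ k * (n.choose k) * ((n + k).choose k) = (-1) ^ n := by
  rw [← eval_one_shiftedLegendre, eval_shiftedLegendre]
  refine Finset.sum_congr rfl fun k _ => ?_
  rw [one_pow, mul_one, Nat.choose_symm_add]

theorem stmt_2 (n : ℕ) (hn : 0 < n) :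
    ∑ k ∈ Finset.range (n + 1),
        (-1 : ℤ) ^ k * (n.choose k) * ((n + k).choose k) = (-1) ^ n :=
  stmt_2_general n
end

section
/- For n ≥ 1 and r = 1, the identity ∑_{k=1}^{n} ((-1)^k/k) · C(n,k) · C(n+k,k) = -2·H_n(1) holds, where H_n(1) = ∑_{k=1}^n 1/k. -/
/-!
Write `S n` for the left-hand side. Since
`C(n+1,k) C(n+1+k,k) / (C(n,k) C(n+k,k)) = (n+1+k)/(n+1-k)`, comparing `S (n+1)` with `S n`
term by term gives `S (n+1) - S n = 2/(n+1) · ∑_{k=1}^{n+1} (-1)^k C(n+1,k) C(n+k,k)`.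
That alternating sum is `-1`: `k ↦ C(n+k,n)` is a polynomial of degree `n`, so its
`(n+1)`-st forward difference vanishes, and only the `k = 0` term is left over.
Induction on `n` then yields `S n = -2 H_n`.
-/

open Finset

theorem alternating_sum_choose_mul_choose_add_eq_zero {m j : ℕ} (h : j < m) :
    ∑ k ∈ range (m + 1), (-1 : ℤ) ^ k * m.choose k * (k + j).choose j = 0 := by
  obtain ⟨d, rfl⟩ : ∃ d, m = d + 1 + j := ⟨m - j - 1, by omega⟩
  have hconst : (fwdDiff 1)^[j] (fun x : ℕ ↦ (x.choose j : ℤ)) = fun _ ↦ 1 := by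
    simpa using fwdDiff_iter_choose 0 j
  have hdiff : (fwdDiff 1)^[d + 1 + j] (fun x : ℕ ↦ ((x + j).choose j : ℤ)) 0 = 0 := by
    rw [fwdDiff_iter_comp_add 1 (fun x : ℕ ↦ (x.choose j : ℤ)), Function.iterate_add_apply,
      hconst, Function.iterate_succ_apply, fwdDiff_const]
    simp [fwdDiff_iter_eq_sum_shift]
  rw [fwdDiff_iter_eq_sum_shift] at hdiff
  rw [← mul_eq_zero_of_right ((-1 : ℤ) ^ (d + 1 + j)) hdiff, mul_sum]
  refine sum_congr rfl fun k hk ↦ ?_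
  obtain ⟨i, hi⟩ : ∃ i, d + 1 + j = k + i := ⟨d + 1 + j - k, by grind⟩
  have hsign : (-1 : ℤ) ^ (k + i) * (-1) ^ i = (-1) ^ k := by
    rw [pow_add, mul_assoc, ← pow_add, Even.neg_one_pow ⟨i, rfl⟩, mul_one]
  rw [hi, Nat.add_sub_cancel_left, smul_eq_mul, zero_add, smul_eq_mul, mul_one]
  linear_combination (↑((k + i).choose k) * ↑((k + j).choose j) : ℤ) * hsign.symm

theorem sum_Icc_neg_one_pow_mul_choose_mul_add_choose (n : ℕ) :
    ∑ k ∈ Icc 1 (n + 1), (-1 : ℚ) ^ k * (n + 1).choose k * (n + k).choose k = -1 := by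
  have h := alternating_sum_choose_mul_choose_add_eq_zero (lt_add_one n)
  rw [range_eq_Ico, sum_eq_sum_Ico_succ_bot (by omega), zero_add, Ico_add_one_right_eq_Icc] at h
  have hq : (1 : ℚ) +
      ∑ k ∈ Icc 1 (n + 1), (-1 : ℚ) ^ k * (n + 1).choose k * (k + n).choose n = 0 := by
    simpa using congrArg (Int.cast : ℤ → ℚ) h
  have hsymm (k : ℕ) : (k + n).choose n = (n + k).choose k := by
    rw [add_comm, Nat.choose_symm_add]
  simp only [hsymm] at hq
  linarith

theorem neg_one_pow_div_mul_choose_mul_add_choose_succ (n k : ℕ) (hk0 : 0 < k)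
    (hk : k ≤ n + 1) :
    (-1 : ℚ) ^ k / k * (n + 1).choose k * (n + 1 + k).choose k =
      (-1) ^ k / k * n.choose k * (n + k).choose k +
        2 / (n + 1) * ((-1) ^ k * (n + 1).choose k * (n + k).choose k) := by
  have h₁ : (n.choose k : ℚ) * (n + 1) = (n + 1).choose k * (n + 1 - k) := by
    exact_mod_cast Nat.choose_mul_succ_eq n k
  have h₂ : ((n + k).choose k : ℚ) * (n + k + 1) = (n + k + 1).choose k * (n + 1) := by
    have := Nat.choose_mul_succ_eq (n + k) k
    rw [show n + k + 1 - k = n + 1 by omega] at this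
    exact_mod_cast this
  rw [show n + 1 + k = n + k + 1 by ring]
  generalize (-1 : ℚ) ^ k = s
  field_simp
  linear_combination -s * ((n + 1).choose k * h₂ + (n + k).choose k * h₁)

theorem stmt_3_general (n : ℕ) :
    ∑ k ∈ Finset.Icc 1 n,
        (-1 : ℚ) ^ k / k * (n.choose k) * ((n + k).choose k) =
      -2 * ∑ k ∈ Finset.Icc 1 n, (1 : ℚ) / k := by
  induction n with
  | zero => simp
  | succ n ih =>
    rw [sum_congr rfl fun k hk ↦ neg_one_pow_div_mul_choose_mul_add_choose_succ n k
        (mem_Icc.1 hk).1 (mem_Icc.1 hk).2, sum_add_distrib, ← mul_sum,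
      sum_Icc_neg_one_pow_mul_choose_mul_add_choose, sum_Icc_succ_top (by omega),
      Nat.choose_succ_self, ih, sum_Icc_succ_top (by omega)]
    push_cast
    ring

theorem stmt_3 (n : ℕ) (hn : 1 ≤ n) :
    ∑ k ∈ Finset.Icc 1 n,
        (-1 : ℚ) ^ k / k * (n.choose k) * ((n + k).choose k) =
      -2 * ∑ k ∈ Finset.Icc 1 n, (1 : ℚ) / k :=
  stmt_3_general n
end

section
/- For n ≥ 1 and r = 2, the identity ∑_{k=1}^{n} ((-1)^k/k^2) · C(n,k) · C(n+k,k) = -(2·H_n(2) + 4·H_n(1,1)) = -2·(H_n(1))^2 holds. -/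
/-!
Write `a(n,k) = C(n,k) C(n+k,k)` and `b(n,k) = C(n+1,k) C(n+k,k)`. The contiguous relations
`(n+1) a(n+1,k) = (n+1+k) b(n,k)` and `(n+1) a(n,k) = (n+1-k) b(n,k)` give
`a(n+1,k) - a(n,k) = 2k b(n,k) / (n+1)`, so `∑ₖ (-1)^k a(n,k) / k` and `∑ₖ (-1)^k a(n,k) / k²`
can be computed by induction on `n` once `∑_{k ≥ 1} (-1)^k b(n,k) = -1` is known. That follows from
`2 b(n,k) = a(n+1,k) + a(n,k)` and `∑ₖ (-1)^k a(n,k) = (-1)^n`, the value at `1` of the shifted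
Legendre polynomial. The result is `-2 Hₙ` for the first sum and then `-2 Hₙ²` for the second.
-/

open Finset Polynomial

theorem alternating_sum_range_choose_mul_choose_add {R : Type*} [CommRing R] (n : ℕ) :
    ∑ k ∈ range (n + 1), (-1 : R) ^ k * n.choose k * (n + k).choose k = (-1) ^ n := by
  have h := shiftedLegendre_eval_symm n (1 : R)
  rw [sub_self, ← coeff_zero_eq_aeval_zero', coeff_shiftedLegendre] at h
  simp [shiftedLegendre] at h
  rw [← h]
  exact sum_congr rfl fun k _ => by rw [Nat.choose_symm_add]

section Contiguous

variable {R : Type*} [CommRing R] (n k : ℕ)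

theorem cast_choose_mul_succ_eq :
    (n.choose k : R) * (n + 1) = (n + 1).choose k * (n + 1 - k) := by
  rcases le_or_gt k (n + 1) with hk | hk
  · have h := congrArg (Nat.cast : ℕ → R) (Nat.choose_mul_succ_eq n k)
    push_cast [Nat.cast_sub hk] at h
    exact h
  · simp [Nat.choose_eq_zero_of_lt hk, Nat.choose_eq_zero_of_lt (by omega : n < k)]

theorem succ_mul_choose_succ_add :
    (n + 1 : R) * (n + 1 + k).choose k = (n + 1 + k) * (n + k).choose k := by
  have h := cast_choose_mul_succ_eq (R := R) (n + k) k
  rw [show n + k + 1 = n + 1 + k by ring] at h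
  push_cast at h
  linear_combination -h

end Contiguous

theorem alternating_sum_Icc_choose_succ_mul_choose_add (n : ℕ) :
    ∑ k ∈ Icc 1 (n + 1), (-1 : ℚ) ^ k * ((n + 1).choose k * (n + k).choose k) = -1 := by
  have hn : ∑ k ∈ range (n + 1 + 1), (-1 : ℚ) ^ k * n.choose k * (n + k).choose k = (-1) ^ n := by
    simp [sum_range_succ _ (n + 1), alternating_sum_range_choose_mul_choose_add]
  have hsum : ∑ k ∈ range (n + 1 + 1), (-1 : ℚ) ^ k * ((n + 1).choose k * (n + k).choose k) = 0 := by
    have hterm : ∀ k, (-1 : ℚ) ^ k * ((n + 1).choose k * (n + k).choose k) =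
        ((-1) ^ k * (n + 1).choose k * (n + 1 + k).choose k +
          (-1) ^ k * n.choose k * (n + k).choose k) / 2 := by
      intro k
      apply mul_left_cancel₀ (n.cast_add_one_ne_zero (R := ℚ))
      linear_combination (-(-1 : ℚ) ^ k / 2) *
        ((n + 1).choose k * succ_mul_choose_succ_add (R := ℚ) n k +
          (n + k).choose k * cast_choose_mul_succ_eq (R := ℚ) n k)
    rw [sum_congr rfl fun k _ => hterm k, ← sum_div, sum_add_distrib, hn,
      alternating_sum_range_choose_mul_choose_add (n + 1), pow_succ]
    ring
  rw [range_eq_Ico, sum_eq_sum_Ico_succ_bot (by omega), Ico_add_one_right_eq_Icc] at hsum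
  simp only [pow_zero, Nat.choose_zero_right, Nat.cast_one, mul_one, zero_add] at hsum
  linarith

theorem alternating_sum_Icc_choose_mul_choose_add_succ_sub (g : ℕ → ℚ) (n : ℕ) :
    ∑ k ∈ Icc 1 (n + 1), (-1 : ℚ) ^ k * ((n + 1).choose k * (n + 1 + k).choose k) * g k -
        ∑ k ∈ Icc 1 n, (-1 : ℚ) ^ k * (n.choose k * (n + k).choose k) * g k =
      2 / (n + 1) *
        ∑ k ∈ Icc 1 (n + 1), (-1 : ℚ) ^ k * ((n + 1).choose k * (n + k).choose k) * (k * g k) := by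
  have hext : ∑ k ∈ Icc 1 n, (-1 : ℚ) ^ k * (n.choose k * (n + k).choose k) * g k =
      ∑ k ∈ Icc 1 (n + 1), (-1 : ℚ) ^ k * (n.choose k * (n + k).choose k) * g k := by
    simp [sum_Icc_succ_top]
  rw [hext, ← sum_sub_distrib, mul_sum]
  refine sum_congr rfl fun k _ => ?_
  rw [div_mul_eq_mul_div, eq_div_iff n.cast_add_one_ne_zero]
  linear_combination (-1 : ℚ) ^ k * g k *
    ((n + 1).choose k * succ_mul_choose_succ_add (R := ℚ) n k -
      (n + k).choose k * cast_choose_mul_succ_eq (R := ℚ) n k)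

theorem alternating_sum_Icc_choose_mul_choose_add_div (n : ℕ) :
    ∑ k ∈ Icc 1 n, (-1 : ℚ) ^ k * (n.choose k * (n + k).choose k) / k = -2 * harmonic n := by
  induction n with
  | zero => simp
  | succ n ih =>
    have h := alternating_sum_Icc_choose_mul_choose_add_succ_sub (fun k => 1 / (k : ℚ)) n
    have hb : ∑ k ∈ Icc 1 (n + 1),
        (-1 : ℚ) ^ k * ((n + 1).choose k * (n + k).choose k) * (k * (1 / k)) = -1 := by
      refine (sum_congr rfl fun k hk => ?_).trans (alternating_sum_Icc_choose_succ_mul_choose_add n)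
      rw [mul_one_div_cancel (Nat.cast_ne_zero.2 (by simp at hk; omega)), mul_one]
    beta_reduce at h
    rw [hb] at h
    simp only [← div_eq_mul_one_div, ih] at h
    rw [harmonic_succ]
    push_cast
    linear_combination h

theorem alternating_sum_Icc_choose_mul_choose_add_div_sq (n : ℕ) :
    ∑ k ∈ Icc 1 n, (-1 : ℚ) ^ k * (n.choose k * (n + k).choose k) / k ^ 2 =
      -2 * harmonic n ^ 2 := by
  induction n with
  | zero => simp
  | succ n ih =>
    have h := alternating_sum_Icc_choose_mul_choose_add_succ_sub (fun k => 1 / (k : ℚ) ^ 2) n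
    have hb : ∑ k ∈ Icc 1 (n + 1),
        (-1 : ℚ) ^ k * ((n + 1).choose k * (n + k).choose k) * (k * (1 / k ^ 2)) =
        ∑ k ∈ Icc 1 (n + 1), (-1 : ℚ) ^ k * ((n + 1).choose k * (n + 1 + k).choose k) / k -
          1 / (n + 1) * ∑ k ∈ Icc 1 (n + 1), (-1 : ℚ) ^ k * ((n + 1).choose k * (n + k).choose k) := by
      rw [mul_sum, ← sum_sub_distrib]
      refine sum_congr rfl fun k hk => ?_
      have hk : (k : ℚ) ≠ 0 := Nat.cast_ne_zero.2 (by simp at hk; omega)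
      field_simp
      linear_combination -((n + 1).choose k : ℚ) * succ_mul_choose_succ_add (R := ℚ) n k
    beta_reduce at h
    rw [hb, alternating_sum_Icc_choose_succ_mul_choose_add, ← Nat.cast_succ,
      alternating_sum_Icc_choose_mul_choose_add_div] at h
    simp only [← div_eq_mul_one_div, ih] at h
    rw [harmonic_succ] at h ⊢
    push_cast at h ⊢
    linear_combination h

theorem sq_sum_Icc {R : Type*} [CommSemiring R] (f : ℕ → R) (n : ℕ) :
    (∑ k ∈ Icc 1 n, f k) ^ 2 =
      ∑ k ∈ Icc 1 n, f k ^ 2 + 2 * ∑ k ∈ Icc 1 n, ∑ j ∈ Ico 1 k, f j * f k := by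
  induction n with
  | zero => simp
  | succ n ih =>
    have hle : 1 ≤ n + 1 := Nat.le_add_left 1 n
    rw [sum_Icc_succ_top hle, sum_Icc_succ_top hle, sum_Icc_succ_top hle, Ico_add_one_right_eq_Icc,
      ← sum_mul, add_sq, ih]
    ring

theorem stmt_4_general (n : ℕ) :
    (∑ k ∈ Finset.Icc 1 n,
        (-1 : ℚ) ^ k / (k : ℚ) ^ 2 * (n.choose k) * ((n + k).choose k) =
      -(2 * ∑ k ∈ Finset.Icc 1 n, (1 : ℚ) / (k : ℚ) ^ 2 +
        4 * ∑ k ∈ Finset.Icc 1 n, ∑ j ∈ Finset.Ico 1 k, (1 : ℚ) / ((j : ℚ) * k))) ∧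
    (∑ k ∈ Finset.Icc 1 n,
        (-1 : ℚ) ^ k / (k : ℚ) ^ 2 * (n.choose k) * ((n + k).choose k) =
      -2 * (∑ k ∈ Finset.Icc 1 n, (1 : ℚ) / k) ^ 2) := by
  have hsq : ∑ k ∈ Icc 1 n, (-1 : ℚ) ^ k / (k : ℚ) ^ 2 * (n.choose k) * ((n + k).choose k) =
      -2 * (∑ k ∈ Icc 1 n, (1 : ℚ) / k) ^ 2 := by
    simp only [one_div, ← harmonic_eq_sum_Icc, ← alternating_sum_Icc_choose_mul_choose_add_div_sq]
    exact sum_congr rfl fun k _ => by ring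
  refine ⟨?_, hsq⟩
  rw [hsq, sq_sum_Icc]
  simp only [div_pow, one_pow, one_div_mul_one_div]
  ring

theorem stmt_4 (n : ℕ) (hn : 1 ≤ n) :
    (∑ k ∈ Finset.Icc 1 n,
        (-1 : ℚ) ^ k / (k : ℚ) ^ 2 * (n.choose k) * ((n + k).choose k) =
      -(2 * ∑ k ∈ Finset.Icc 1 n, (1 : ℚ) / (k : ℚ) ^ 2 +
        4 * ∑ k ∈ Finset.Icc 1 n, ∑ j ∈ Finset.Ico 1 k, (1 : ℚ) / ((j : ℚ) * k))) ∧
    (∑ k ∈ Finset.Icc 1 n,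
        (-1 : ℚ) ^ k / (k : ℚ) ^ 2 * (n.choose k) * ((n + k).choose k) =
      -2 * (∑ k ∈ Finset.Icc 1 n, (1 : ℚ) / k) ^ 2) :=
  stmt_4_general n
end

section
/- For n ≥ 1 and r = 3, the identity ∑_{k=1}^{n} ((-1)^k/k^3) · C(n,k) · C(n+k,k) = -(2·H_n(3) + 4·H_n(2,1) + 4·H_n(1,2) + 8·H_n(1,1,1)) holds, and this equals -(4/3)·H_n(1)^3 − (2/3)·H_n(3) modulo the stuffle relations (as an exact identity of rational numbers). -/
/-!
Partial fractions give
`∏_{j ≤ n} (j - x)/(j + x) = 1 + ∑_{k ≤ n} c_k x/(x + k)`, `c_k = (-1)^k C(n,k) C(n+k,k)`,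
the `c_k` being read off from the residues at `x = -k`. Expanding at `x = 0`, the coefficient of
`x³` on the right is `∑ c_k / k³`. On the left the product is
`exp (∑_j log ((1 - x/j)/(1 + x/j))) = exp (-2 H_n(1) x - (2/3) H_n(3) x³ + O(x⁵))`,
whose `x³` coefficient is `-(4/3) H_n(1)³ - (2/3) H_n(3)`. Both expansions are carried out in
`ℚ[X]` modulo `X⁴`. The stuffle expansion of `H_n(1)³` then gives the depth-three form.
-/

open Finset Polynomial Nat

namespace LegendreHarmonic

def harmonicPow (s n : ℕ) : ℚ := ∑ k ∈ Icc 1 n, 1 / (k : ℚ) ^ s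

lemma harmonicPow_zero_right (s : ℕ) : harmonicPow s 0 = 0 := by
  simp [harmonicPow]

lemma harmonicPow_succ (s n : ℕ) :
    harmonicPow s (n + 1) = harmonicPow s n + 1 / ((n : ℚ) + 1) ^ s := by
  rw [harmonicPow, sum_Icc_succ_top (by omega)]
  push_cast
  rfl

lemma two_mul_sum_Ico_one_div_mul (n : ℕ) :
    2 * ∑ k ∈ Icc 1 n, ∑ j ∈ Ico 1 k, 1 / ((j : ℚ) * k) =
      harmonicPow 1 n ^ 2 - harmonicPow 2 n := by
  induction n with
  | zero => simp [harmonicPow_zero_right]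
  | succ n ih =>
    have row : ∑ j ∈ Ico 1 (n + 1), 1 / ((j : ℚ) * ((n + 1 : ℕ) : ℚ)) =
        harmonicPow 1 n / ((n : ℚ) + 1) := by
      simp_rw [← div_div, ← sum_div, Ico_add_one_right_eq_Icc, harmonicPow, pow_one]
      push_cast
      rfl
    rw [sum_Icc_succ_top (by omega), row, harmonicPow_succ, harmonicPow_succ]
    field_simp
    linear_combination ((n : ℚ) + 1) ^ 2 * ih

lemma harmonicPow_one_pow_three (n : ℕ) :
    harmonicPow 1 n ^ 3 = harmonicPow 3 n +
      3 * ∑ k ∈ Icc 1 n, ∑ j ∈ Ico 1 k, 1 / ((j : ℚ) ^ 2 * k) +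
      3 * ∑ k ∈ Icc 1 n, ∑ j ∈ Ico 1 k, 1 / ((j : ℚ) * (k : ℚ) ^ 2) +
      6 * ∑ k ∈ Icc 1 n, ∑ j ∈ Ico 1 k, ∑ i ∈ Ico 1 j, 1 / ((i : ℚ) * j * k) := by
  induction n with
  | zero => simp [harmonicPow_zero_right]
  | succ n ih =>
    have row₁ : ∑ j ∈ Ico 1 (n + 1), 1 / ((j : ℚ) ^ 2 * ((n + 1 : ℕ) : ℚ)) =
        harmonicPow 2 n / ((n : ℚ) + 1) := by
      simp_rw [← div_div, ← sum_div, Ico_add_one_right_eq_Icc, harmonicPow]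
      push_cast
      rfl
    have row₂ : ∑ j ∈ Ico 1 (n + 1), 1 / ((j : ℚ) * ((n + 1 : ℕ) : ℚ) ^ 2) =
        harmonicPow 1 n / ((n : ℚ) + 1) ^ 2 := by
      simp_rw [← div_div, ← sum_div, Ico_add_one_right_eq_Icc, harmonicPow, pow_one]
      push_cast
      rfl
    have row₃ :
        ∑ j ∈ Ico 1 (n + 1), ∑ i ∈ Ico 1 j, 1 / ((i : ℚ) * j * ((n + 1 : ℕ) : ℚ)) =
        (harmonicPow 1 n ^ 2 - harmonicPow 2 n) / (2 * ((n : ℚ) + 1)) := by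
      have h := two_mul_sum_Ico_one_div_mul n
      simp only [← div_div (1 : ℚ) (_ * _) ((n + 1 : ℕ) : ℚ), ← sum_div,
        Ico_add_one_right_eq_Icc]
      push_cast
      field_simp
      linear_combination h
    rw [sum_Icc_succ_top (by omega), sum_Icc_succ_top (by omega), sum_Icc_succ_top (by omega),
      row₁, row₂, row₃, harmonicPow_succ, harmonicPow_succ, pow_one]
    field_simp
    linear_combination 2 * ((n : ℚ) + 1) ^ 3 * ih

lemma prod_Icc_natCast_add (n i : ℕ) : ∏ j ∈ Icc 1 n, ((j : ℚ) + i) = (n + i)! / i ! := by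
  induction n with
  | zero => simp [Nat.cast_ne_zero.mpr i.factorial_ne_zero]
  | succ n ih =>
    rw [prod_Icc_succ_top (by omega), ih, show n + 1 + i = (n + i) + 1 by omega,
      factorial_succ]
    push_cast
    ring

lemma prod_Icc_natCast (m : ℕ) : ∏ j ∈ Icc 1 m, (j : ℚ) = m ! := by
  simpa using prod_Icc_natCast_add m 0

lemma prod_Ico_natCast_sub_self (i : ℕ) :
    ∏ j ∈ Ico 1 i, ((j : ℚ) - i) = (-1) ^ (i - 1) * (i - 1)! := by
  have reflect : ∏ j ∈ Ico 1 i, ((j : ℚ) - i) = ∏ j ∈ Icc 1 (i - 1), -(j : ℚ) := by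
    apply prod_nbij' (i - ·) (i - ·)
    iterate 4 · intro j hj; simp only [mem_Ico, mem_Icc] at hj ⊢; omega
    · intro j hj
      rw [Nat.cast_sub (mem_Ico.mp hj).2.le]
      ring
  rw [reflect, prod_neg, prod_Icc_natCast, card_Icc, Nat.add_sub_cancel]

lemma prod_Ioc_natCast_sub_self (i n : ℕ) : ∏ j ∈ Ioc i n, ((j : ℚ) - i) = (n - i)! := by
  rw [← prod_Icc_natCast]
  apply prod_nbij' (· - i) (· + i)
  iterate 4 · intro j hj; simp only [mem_Ioc, mem_Icc] at hj ⊢; omega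
  · intro j hj
    rw [Nat.cast_sub (mem_Ioc.mp hj).1.le]

lemma prod_Icc_erase_natCast_sub_self {n i : ℕ} (hi : i ∈ Icc 1 n) :
    ∏ j ∈ (Icc 1 n).erase i, ((j : ℚ) - i) = (-1) ^ (i - 1) * (i - 1)! * (n - i)! := by
  have split : (Icc 1 n).erase i = Ico 1 i ∪ Ioc i n := by
    ext j
    simp only [mem_erase, mem_Icc, mem_union, mem_Ico, mem_Ioc] at hi ⊢
    omega
  have disj : Disjoint (Ico 1 i) (Ioc i n) := by
    rw [disjoint_left]
    intro j hj hj'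
    simp only [mem_Ico, mem_Ioc] at hj hj'
    omega
  rw [split, prod_union disj, prod_Ico_natCast_sub_self, prod_Ioc_natCast_sub_self]

/-- The coefficient of `x^k` in the Legendre polynomial `P_n(1 - 2x)`. -/
def legendreCoeff (n k : ℕ) : ℚ := (-1) ^ k * n.choose k * (n + k).choose k

lemma legendreCoeff_mul_neg_mul_eq {n i : ℕ} (hi : i ∈ Icc 1 n) :
    legendreCoeff n i * (-i) * ((-1) ^ (i - 1) * (i - 1)! * (n - i)!) = (n + i)! / i ! := by
  obtain ⟨hi1, hin⟩ := mem_Icc.mp hi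
  obtain ⟨l, rfl⟩ : ∃ l, i = l + 1 := ⟨i - 1, by omega⟩
  have sign : (-1 : ℚ) ^ (l + 1) * (-1) ^ l = -1 := by
    rw [← pow_add, show l + 1 + l = 2 * l + 1 by omega, pow_succ, pow_mul]
    norm_num
  rw [legendreCoeff, Nat.cast_choose ℚ hin, add_comm n, Nat.cast_add_choose, Nat.add_sub_cancel,
    factorial_succ]
  push_cast
  field_simp
  linear_combination -sign

lemma natDegree_prod_le_card {ι R : Type*} [CommSemiring R] {s : Finset ι} {f : ι → R[X]}
    (h : ∀ i ∈ s, (f i).natDegree ≤ 1) : (∏ i ∈ s, f i).natDegree ≤ #s :=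
  (natDegree_prod_le _ _).trans (by simpa using sum_le_card_nsmul s _ 1 h)

lemma natDegree_prod_X_add_C_le (s : Finset ℕ) :
    (∏ j ∈ s, (X + C (j : ℚ))).natDegree ≤ #s :=
  natDegree_prod_le_card fun _ _ => by compute_degree

lemma prod_C_sub_X_eq_prod_X_add_C_add_sum (n : ℕ) :
    ∏ j ∈ Icc 1 n, (C (j : ℚ) - X) = ∏ j ∈ Icc 1 n, (X + C (j : ℚ)) + ∑ k ∈ Icc 1 n,
      C (legendreCoeff n k) * X * ∏ j ∈ (Icc 1 n).erase k, (X + C (j : ℚ)) := by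
  refine eq_of_degree_sub_lt_of_eval_index_eq (range (n + 1)) (v := fun i : ℕ => -(i : ℚ))
    (fun a _ b _ h => by simpa using h) ?_ ?_
  · have lhs : (∏ j ∈ Icc 1 n, (C (j : ℚ) - X)).natDegree ≤ n := by
      refine (natDegree_prod_le_card (s := Icc 1 n) fun j _ => ?_).trans (by simp)
      compute_degree
    have rhs : (∏ j ∈ Icc 1 n, (X + C (j : ℚ)) + ∑ k ∈ Icc 1 n,
        C (legendreCoeff n k) * X * ∏ j ∈ (Icc 1 n).erase k, (X + C (j : ℚ))).natDegree
          ≤ n := by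
      refine (natDegree_add_le _ _).trans (max_le ?_ (natDegree_sum_le_of_forall_le _ _ ?_))
      · simpa using natDegree_prod_X_add_C_le (Icc 1 n)
      · intro k hk
        have hX : (C (legendreCoeff n k) * X).natDegree ≤ 1 := by compute_degree
        have hE := natDegree_prod_X_add_C_le ((Icc 1 n).erase k)
        rw [card_erase_of_mem hk, card_Icc] at hE
        have := mem_Icc.mp hk
        exact natDegree_mul_le.trans (by omega)
    rw [card_range]
    exact (degree_le_of_natDegree_le ((natDegree_sub_le _ _).trans (max_le lhs rhs))).trans_lt
      (by exact_mod_cast Nat.lt_succ_self n)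
  · intro i hi
    simp only [eval_prod, eval_add, eval_sub, eval_mul, eval_C, eval_X, eval_finsetSum]
    rcases Nat.eq_zero_or_pos i with rfl | hi0
    · simp
    have hi' : i ∈ Icc 1 n := mem_Icc.mpr ⟨hi0, Nat.lt_succ_iff.mp (mem_range.mp hi)⟩
    have vanish {s : Finset ℕ} (hs : i ∈ s) : ∏ j ∈ s, (-(i : ℚ) + j) = 0 :=
      prod_eq_zero hs (by ring)
    rw [vanish hi', zero_add, sum_eq_single_of_mem i hi' fun k _ hki => by
      rw [vanish (mem_erase.mpr ⟨Ne.symm hki, hi'⟩), mul_zero]]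
    simp_rw [sub_neg_eq_add, neg_add_eq_sub]
    rw [prod_Icc_natCast_add, prod_Icc_erase_natCast_sub_self hi', legendreCoeff_mul_neg_mul_eq hi']

/-- The truncation below degree 4 of `exp (-2 a X - (2/3) b X³)`. -/
noncomputable def expTrunc (a b : ℚ) : ℚ[X] :=
  1 - C (2 * a) * X + C (2 * a ^ 2) * X ^ 2 - C (4 / 3 * a ^ 3 + 2 / 3 * b) * X ^ 3

/-- The truncation below degree 4 of `c X / (1 + c X)`. -/
noncomputable def geomTrunc (c : ℚ) : ℚ[X] := C c * X - C (c ^ 2) * X ^ 2 + C (c ^ 3) * X ^ 3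

lemma coeff_expTrunc_three (a b : ℚ) :
    (expTrunc a b).coeff 3 = -(4 / 3 * a ^ 3 + 2 / 3 * b) := by
  simp only [expTrunc, coeff_sub, coeff_add, coeff_C_mul, coeff_X_pow, coeff_X, coeff_one]
  norm_num

lemma coeff_geomTrunc_three (c : ℚ) : (geomTrunc c).coeff 3 = c ^ 3 := by
  simp only [geomTrunc, coeff_sub, coeff_add, coeff_C_mul, coeff_X_pow, coeff_X]
  norm_num

lemma X_pow_four_dvd_C_sub_X_mul_expTrunc_sub (a b c : ℚ) (hc : c ≠ 0) :
    X ^ 4 ∣ (C c - X) * expTrunc a b - (X + C c) * expTrunc (a + 1 / c) (b + 1 / c ^ 3) := by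
  refine ⟨C (4 / 3 * (a ^ 3 + (a + 1 / c) ^ 3) + 2 / 3 * (b + (b + 1 / c ^ 3))), ?_⟩
  apply Polynomial.funext
  intro x
  simp only [expTrunc, eval_sub, eval_add, eval_mul, eval_pow, eval_C, eval_X, eval_one]
  field_simp
  ring

lemma X_pow_four_dvd_X_sub_geomTrunc_mul (c : ℚ) (hc : c ≠ 0) :
    X ^ 4 ∣ X - geomTrunc c⁻¹ * (X + C c) := by
  refine ⟨C (-c⁻¹ ^ 3), ?_⟩
  apply Polynomial.funext
  intro x
  simp only [geomTrunc, eval_sub, eval_add, eval_mul, eval_pow, eval_C, eval_X]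
  field_simp
  ring

lemma X_pow_four_dvd_prod_C_sub_X_sub_expTrunc_mul (n : ℕ) :
    X ^ 4 ∣ ∏ j ∈ Icc 1 n, (C (j : ℚ) - X) -
      expTrunc (harmonicPow 1 n) (harmonicPow 3 n) * ∏ j ∈ Icc 1 n, (X + C (j : ℚ)) := by
  induction n with
  | zero => simp [harmonicPow_zero_right, expTrunc]
  | succ n ih =>
    have step := X_pow_four_dvd_C_sub_X_mul_expTrunc_sub (harmonicPow 1 n) (harmonicPow 3 n)
      ((n : ℚ) + 1) (by positivity)
    rw [prod_Icc_succ_top (by omega), prod_Icc_succ_top (by omega), harmonicPow_succ,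
      harmonicPow_succ, pow_one]
    push_cast
    convert dvd_add (dvd_mul_of_dvd_right ih (C ((n : ℚ) + 1) - X))
      (dvd_mul_of_dvd_right step (∏ j ∈ Icc 1 n, (X + C (j : ℚ)))) using 1
    ring

lemma X_pow_four_dvd_X_mul_prod_erase_sub_geomTrunc_mul {s : Finset ℕ} {k : ℕ} (hk : k ∈ s)
    (hk0 : k ≠ 0) :
    X ^ 4 ∣ X * ∏ j ∈ s.erase k, (X + C (j : ℚ)) -
      geomTrunc (k : ℚ)⁻¹ * ∏ j ∈ s, (X + C (j : ℚ)) := by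
  rw [← mul_prod_erase s _ hk]
  convert dvd_mul_of_dvd_left (X_pow_four_dvd_X_sub_geomTrunc_mul (k : ℚ) (by exact_mod_cast hk0))
    (∏ j ∈ s.erase k, (X + C (j : ℚ))) using 1
  ring

theorem sum_legendreCoeff_div_pow_three (n : ℕ) :
    ∑ k ∈ Icc 1 n, legendreCoeff n k / (k : ℚ) ^ 3 =
      -(4 / 3) * harmonicPow 1 n ^ 3 - (2 / 3) * harmonicPow 3 n := by
  set D : ℚ[X] := ∏ j ∈ Icc 1 n, (X + C (j : ℚ))
  set T : ℚ[X] := expTrunc (harmonicPow 1 n) (harmonicPow 3 n)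
  set B : ℚ[X] := 1 + ∑ k ∈ Icc 1 n, C (legendreCoeff n k) * geomTrunc (k : ℚ)⁻¹
  have partialFractions : X ^ 4 ∣ ∏ j ∈ Icc 1 n, (C (j : ℚ) - X) - B * D := by
    rw [prod_C_sub_X_eq_prod_X_add_C_add_sum, add_mul, one_mul, sum_mul,
      add_sub_add_left_eq_sub, ← sum_sub_distrib]
    refine dvd_sum fun k hk => ?_
    convert dvd_mul_of_dvd_right (X_pow_four_dvd_X_mul_prod_erase_sub_geomTrunc_mul hk
      (Nat.one_le_iff_ne_zero.mp (mem_Icc.mp hk).1)) (C (legendreCoeff n k)) using 1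
    ring
  have product : X ^ 4 ∣ ∏ j ∈ Icc 1 n, (C (j : ℚ) - X) - T * D :=
    X_pow_four_dvd_prod_C_sub_X_sub_expTrunc_mul n
  have hD : ¬ X ∣ D := by
    rw [X_dvd_iff, coeff_zero_eq_eval_zero, eval_prod]
    simpa [prod_Icc_natCast] using n.factorial_ne_zero
  have h : X ^ 4 ∣ T - B := prime_X.pow_dvd_of_dvd_mul_right 4 hD (by
    convert dvd_sub partialFractions product using 1
    ring)
  have h3 := X_pow_dvd_iff.mp h 3 (by norm_num)
  rw [coeff_sub, coeff_expTrunc_three, coeff_add, finsetSum_coeff] at h3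
  simp only [coeff_C_mul, coeff_geomTrunc_three, coeff_one, OfNat.ofNat_ne_zero, if_false,
    zero_add] at h3
  simp only [div_eq_mul_inv, ← inv_pow]
  linear_combination -h3

end LegendreHarmonic

theorem stmt_5_general (n : ℕ) :
    (∑ k ∈ Finset.Icc 1 n,
        (-1 : ℚ) ^ k / (k : ℚ) ^ 3 * (n.choose k) * ((n + k).choose k) =
      -(2 * ∑ k ∈ Finset.Icc 1 n, (1 : ℚ) / (k : ℚ) ^ 3 +
        4 * ∑ k ∈ Finset.Icc 1 n, ∑ j ∈ Finset.Ico 1 k, (1 : ℚ) / ((j : ℚ) ^ 2 * k) +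
        4 * ∑ k ∈ Finset.Icc 1 n, ∑ j ∈ Finset.Ico 1 k, (1 : ℚ) / ((j : ℚ) * (k : ℚ) ^ 2) +
        8 * ∑ k ∈ Finset.Icc 1 n, ∑ j ∈ Finset.Ico 1 k, ∑ i ∈ Finset.Ico 1 j,
              (1 : ℚ) / ((i : ℚ) * j * k))) ∧
    (∑ k ∈ Finset.Icc 1 n,
        (-1 : ℚ) ^ k / (k : ℚ) ^ 3 * (n.choose k) * ((n + k).choose k) =
      -(4 / 3) * (∑ k ∈ Finset.Icc 1 n, (1 : ℚ) / k) ^ 3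
        - (2 / 3) * ∑ k ∈ Finset.Icc 1 n, (1 : ℚ) / (k : ℚ) ^ 3) := by
  have sum_eq : ∑ k ∈ Finset.Icc 1 n,
      (-1 : ℚ) ^ k / (k : ℚ) ^ 3 * (n.choose k) * ((n + k).choose k) =
        -(4 / 3) * LegendreHarmonic.harmonicPow 1 n ^ 3 -
          (2 / 3) * LegendreHarmonic.harmonicPow 3 n := by
    rw [← LegendreHarmonic.sum_legendreCoeff_div_pow_three]
    exact Finset.sum_congr rfl fun k _ => by rw [LegendreHarmonic.legendreCoeff]; ring
  have stuffle := LegendreHarmonic.harmonicPow_one_pow_three n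
  simp only [LegendreHarmonic.harmonicPow, pow_one] at sum_eq stuffle
  exact ⟨by linear_combination sum_eq - 4 / 3 * stuffle, sum_eq⟩

theorem stmt_5 (n : ℕ) (hn : 1 ≤ n) :
    (∑ k ∈ Finset.Icc 1 n,
        (-1 : ℚ) ^ k / (k : ℚ) ^ 3 * (n.choose k) * ((n + k).choose k) =
      -(2 * ∑ k ∈ Finset.Icc 1 n, (1 : ℚ) / (k : ℚ) ^ 3 +
        4 * ∑ k ∈ Finset.Icc 1 n, ∑ j ∈ Finset.Ico 1 k, (1 : ℚ) / ((j : ℚ) ^ 2 * k) +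
        4 * ∑ k ∈ Finset.Icc 1 n, ∑ j ∈ Finset.Ico 1 k, (1 : ℚ) / ((j : ℚ) * (k : ℚ) ^ 2) +
        8 * ∑ k ∈ Finset.Icc 1 n, ∑ j ∈ Finset.Ico 1 k, ∑ i ∈ Finset.Ico 1 j,
              (1 : ℚ) / ((i : ℚ) * j * k))) ∧
    (∑ k ∈ Finset.Icc 1 n,
        (-1 : ℚ) ^ k / (k : ℚ) ^ 3 * (n.choose k) * ((n + k).choose k) =
      -(4 / 3) * (∑ k ∈ Finset.Icc 1 n, (1 : ℚ) / k) ^ 3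
        - (2 / 3) * ∑ k ∈ Finset.Icc 1 n, (1 : ℚ) / (k : ℚ) ^ 3) :=
  stmt_5_general n
end

section
/- Let p be an odd prime and set n = (p-1)/2. For every integer k with 0 ≤ k ≤ n, the congruence C(n+k, 2k) ≡ C(2k,k) · (-1)^k / 16^k (mod p^2) holds, i.e., 16^k · C(n+k,2k) ≡ (-1)^k · C(2k,k) (mod p^2) after clearing denominators (16 is invertible mod p^2). -/
/-!
With `p = 2n + 1`, pairing the factors of `4^k (n+k)(n+k-1)⋯(n-k+1)` symmetrically gives
`∏_{j<k} (p² - (2j+1)²)`, which is `≡ (-1)^k ∏_{j<k} (2j+1)² (mod p²)`. Multiplied by `4^k`, the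
latter is `C(2k,k) (2k)!`, and `(2k)!` is prime to `p` because `2k < p`, so it can be cancelled.
-/

open Finset Nat

theorem prod_range_two_mul_add_sub_odd {R : Type*} [CommRing R] (x : R) (k : ℕ) :
    ∏ i ∈ range (2 * k), (x + 2 * k - (2 * i + 1)) =
      ∏ j ∈ range k, (x ^ 2 - (2 * j + 1) ^ 2) := by
  induction k with
  | zero => simp
  | succ k ih =>
    have hshift :
        ∏ i ∈ range (2 * k), (x + 2 * ((k + 1 : ℕ) : R) - (2 * ((i + 1 : ℕ) : R) + 1)) =
        ∏ i ∈ range (2 * k), (x + 2 * k - (2 * i + 1)) :=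
      prod_congr rfl fun i _ => by push_cast; ring
    rw [show 2 * (k + 1) = 2 * k + 1 + 1 by ring, prod_range_succ, prod_range_succ', hshift, ih,
      prod_range_succ]
    push_cast
    ring

theorem four_pow_mul_descFactorial_add (n k : ℕ) :
    (4 ^ k * (n + k).descFactorial (2 * k) : ℤ) =
      ∏ j ∈ range k, (((2 * n + 1 : ℕ) : ℤ) ^ 2 - (2 * j + 1) ^ 2) := by
  rw [← prod_range_two_mul_add_sub_odd, ← descPochhammer_eval_eq_descFactorial,
    descPochhammer_eval_eq_prod_range, show (4 : ℤ) ^ k = ∏ _i ∈ range (2 * k), 2 by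
      rw [prod_const, card_range, pow_mul]; norm_num, ← prod_mul_distrib]
  refine prod_congr rfl fun i _ => ?_
  push_cast
  ring

theorem factorial_two_mul_eq_prod_odd (k : ℕ) :
    (2 * k)! = 2 ^ k * k ! * ∏ j ∈ range k, (2 * j + 1) := by
  induction k with
  | zero => simp
  | succ k ih =>
    rw [show 2 * (k + 1) = 2 * k + 1 + 1 by ring, factorial_succ, factorial_succ, ih,
      prod_range_succ, factorial_succ]
    ring

theorem two_mul_choose_self_mul_factorial (k : ℕ) :
    (2 * k).choose k * (2 * k)! = 4 ^ k * (∏ j ∈ range k, (2 * j + 1)) ^ 2 := by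
  have hchoose : (2 * k).choose k * (k ! * k !) = (2 * k)! := by
    simpa [two_mul, mul_assoc] using
      Nat.choose_mul_factorial_mul_factorial (n := 2 * k) (k := k) (by omega)
  apply Nat.eq_of_mul_eq_mul_right (Nat.mul_pos k.factorial_pos k.factorial_pos)
  calc (2 * k).choose k * (2 * k)! * (k ! * k !) = (2 * k)! * (2 * k)! := by
        rw [← hchoose]; ring
    _ = 4 ^ k * (∏ j ∈ range k, (2 * j + 1)) ^ 2 * (k ! * k !) := by
        rw [factorial_two_mul_eq_prod_odd, show 4 ^ k = 2 ^ k * 2 ^ k by rw [← mul_pow]; rfl]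
        ring

theorem Int.ModEq.cancel_right_of_coprime {m c : ℕ} {a b : ℤ} (hmc : m.Coprime c)
    (h : a * c ≡ b * c [ZMOD m]) : a ≡ b [ZMOD m] := by
  rw [Int.modEq_iff_dvd, ← sub_mul] at h
  exact Int.modEq_iff_dvd.mpr ((Nat.isCoprime_iff_coprime.mpr hmc).dvd_of_dvd_mul_right h)

theorem stmt_6 (p : ℕ) (hp : p.Prime) (hodd : Odd p) (k : ℕ)
    (hk : k ≤ (p - 1) / 2) :
    (16 ^ k * ((p - 1) / 2 + k).choose (2 * k) : ℤ) ≡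
      (-1) ^ k * (2 * k).choose k [ZMOD (p : ℤ) ^ 2] := by
  set n := (p - 1) / 2
  have hpn : p = 2 * n + 1 := by obtain ⟨m, hm⟩ := hodd; omega
  have hcoprime : (p ^ 2).Coprime (2 * k)! :=
    Nat.Coprime.pow_left 2 <| (Nat.Prime.coprime_iff_not_dvd hp).mpr <| by
      rw [hp.dvd_factorial]; omega
  have hcentral := congrArg (Nat.cast : ℕ → ℤ) (two_mul_choose_self_mul_factorial k)
  push_cast at hcentral
  refine Int.ModEq.cancel_right_of_coprime (m := p ^ 2) hcoprime ?_
  push_cast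
  calc (16 ^ k * ((n + k).choose (2 * k) : ℤ)) * (2 * k)!
      = 4 ^ k * (4 ^ k * (n + k).descFactorial (2 * k)) := by
        rw [Nat.descFactorial_eq_factorial_mul_choose, show (16 : ℤ) ^ k = 4 ^ k * 4 ^ k by
          rw [← mul_pow]; norm_num]
        push_cast; ring
    _ = 4 ^ k * ∏ j ∈ range k, ((p : ℤ) ^ 2 - (2 * j + 1) ^ 2) := by
        rw [four_pow_mul_descFactorial_add, hpn]
    _ ≡ 4 ^ k * ∏ j ∈ range k, ((0 : ℤ) - (2 * j + 1) ^ 2) [ZMOD p ^ 2] :=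
        (Int.ModEq.prod fun j _ => (Int.modEq_zero_iff_dvd.mpr dvd_rfl).sub_right _).mul_left _
    _ = (-1) ^ k * (2 * k).choose k * (2 * k)! := by
        rw [mul_assoc, hcentral, prod_congr rfl fun j _ => zero_sub _, prod_neg, card_range,
          prod_pow]
        ring
end

section
/- Let p be an odd prime and n = (p-1)/2. For every integer k with 0 ≤ k ≤ n, (-1)^k · C(n,k) · C(n+k,k) ≡ C(2k,k)^2 / 16^k (mod p^2), where 16^k is invertible modulo p^2. -/
/-!
Write `p = 2n + 1`. Clearing the factor `k!²`, the left side becomes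
`(-4)ᵏ ∏_{j<k} (n - j)(n + j + 1) · 4ᵏ = 4ᵏ ∏_{j<k} ((2j + 1)² - p²)`, because
`-4 (n - j)(n + j + 1) = (2j + 1)² - (2n + 1)²`, while `C(2k, k) · k! = 2ᵏ ∏_{j<k} (2j + 1)` makes the
right side `4ᵏ ∏_{j<k} (2j + 1)²`. The two products agree factor by factor modulo `p²`, and `k!` is
prime to `p` since `k < p`.
-/

open Finset Nat

namespace Nat

theorem cast_choose_mul_factorial_eq_prod_range {R : Type*} [CommRing R] (n k : ℕ) :
    (n.choose k * k ! : R) = ∏ j ∈ range k, ((n : R) - j) := by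
  rw [← descPochhammer_eval_eq_prod_range, descPochhammer_eval_eq_descFactorial,
    descFactorial_eq_factorial_mul_choose, cast_mul, mul_comm]

theorem cast_add_choose_mul_factorial_eq_prod_range {R : Type*} [CommSemiring R] (n k : ℕ) :
    ((n + k).choose k * k ! : R) = ∏ j ∈ range k, ((n : R) + j + 1) := by
  rw [← cast_mul, mul_comm, ← ascFactorial_eq_factorial_mul_choose, ascFactorial_eq_prod_range]
  push_cast
  exact prod_congr rfl fun j _ => add_right_comm _ _ _

theorem centralBinom_mul_factorial (k : ℕ) :
    centralBinom k * k ! = 2 ^ k * ∏ j ∈ range k, (2 * j + 1) := by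
  induction k with
  | zero => simp
  | succ k ih =>
    calc centralBinom (k + 1) * (k + 1)! = (k + 1) * centralBinom (k + 1) * k ! := by
          rw [factorial_succ]; ring
      _ = 2 * (2 * k + 1) * (centralBinom k * k !) := by rw [succ_mul_centralBinom_succ]; ring
      _ = 2 ^ (k + 1) * ∏ j ∈ range (k + 1), (2 * j + 1) := by
          rw [ih, prod_range_succ, pow_succ]; ring

end Nat

theorem Int.ModEq.cancel_right_of_isCoprime {m a b c : ℤ} (hmc : IsCoprime m c)
    (h : a * c ≡ b * c [ZMOD m]) : a ≡ b [ZMOD m] := by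
  rw [Int.modEq_iff_dvd, ← sub_mul] at h
  exact Int.modEq_iff_dvd.2 (hmc.dvd_of_dvd_mul_right h)

theorem neg_four_pow_mul_choose_mul_add_choose (n k : ℕ) :
    (-4) ^ k * (n.choose k * k ! : ℤ) * ((n + k).choose k * k ! : ℤ) =
      ∏ j ∈ range k, ((2 * j + 1 : ℤ) ^ 2 - (2 * n + 1) ^ 2) := by
  calc (-4) ^ k * (n.choose k * k ! : ℤ) * ((n + k).choose k * k ! : ℤ)
      = ∏ j ∈ range k, (-4 * (((n : ℤ) - j) * ((n : ℤ) + j + 1))) := by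
        rw [prod_mul_distrib, prod_mul_distrib, prod_const, card_range,
          cast_choose_mul_factorial_eq_prod_range, cast_add_choose_mul_factorial_eq_prod_range,
          mul_assoc]
    _ = _ := prod_congr rfl fun j _ => by ring

theorem centralBinom_mul_factorial_sq (k : ℕ) :
    ((centralBinom k * k ! : ℕ) : ℤ) ^ 2 = 4 ^ k * ∏ j ∈ range k, (2 * j + 1 : ℤ) ^ 2 := by
  rw [centralBinom_mul_factorial, prod_pow]
  push_cast
  rw [mul_pow, ← pow_mul, mul_comm k, pow_mul]
  norm_num

theorem stmt_7 (p : ℕ) (hp : p.Prime) (hodd : Odd p) (k : ℕ)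
    (hk : k ≤ (p - 1) / 2) :
    ((-1) ^ k * (((p - 1) / 2).choose k) * (((p - 1) / 2 + k).choose k) * 16 ^ k : ℤ) ≡
      ((2 * k).choose k : ℤ) ^ 2 [ZMOD (p : ℤ) ^ 2] := by
  set n := (p - 1) / 2
  have hpn : (p : ℤ) = 2 * n + 1 := by obtain ⟨m, rfl⟩ := hodd; push_cast [n]; omega
  have hcop : IsCoprime ((p : ℤ) ^ 2) ((k ! : ℤ) ^ 2) :=
    (Nat.isCoprime_iff_coprime.2 (hp.coprime_factorial_of_lt (by omega))).pow
  refine Int.ModEq.cancel_right_of_isCoprime hcop ?_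
  calc ((-1) ^ k * (n.choose k) * ((n + k).choose k) * 16 ^ k : ℤ) * (k ! : ℤ) ^ 2
      = 4 ^ k * ((-4) ^ k * (n.choose k * k ! : ℤ) * ((n + k).choose k * k ! : ℤ)) := by
        rw [show (16 : ℤ) = 4 * 4 by norm_num, show (-4 : ℤ) = -1 * 4 by norm_num, mul_pow,
          mul_pow]
        ring
    _ = 4 ^ k * ∏ j ∈ range k, ((2 * j + 1 : ℤ) ^ 2 - (p : ℤ) ^ 2) := by
        rw [neg_four_pow_mul_choose_mul_add_choose, hpn]
    _ ≡ 4 ^ k * ∏ j ∈ range k, (2 * j + 1 : ℤ) ^ 2 [ZMOD (p : ℤ) ^ 2] :=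
        (Int.ModEq.prod fun j _ => Int.sub_modulus_modEq_iff.2 rfl).mul_left _
    _ = ((2 * k).choose k : ℤ) ^ 2 * (k ! : ℤ) ^ 2 := by
        rw [← centralBinom_mul_factorial_sq, centralBinom_eq_two_mul_choose]; push_cast; ring
end

section
/- Let p be an odd prime, n = (p-1)/2, and let a_0, a_1, ..., a_{p-1} be p-adic integers. Then ∑_{k=0}^{p-1} C(2k,k)^2 · a_k / 16^k ≡ ∑_{k=0}^{n} (-1)^k · a_k · C(n,k) · C(n+k,k) (mod p^2). -/
/-!
For `k < p` the integer `4^k (k!)²` is a `p`-adic unit. Multiplying by it turns `C(2k,k)²/16^k`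
into `∏_{j<k} (2j+1)²` and, since `4(n-j)(n+1+j) = p² - (2j+1)²`, turns `(-1)^k C(n,k) C(n+k,k)`
into `∏_{j<k} ((2j+1)² - p²)`; these products agree factor by factor modulo `p²`. This works for
every `k < p` (for `k > n`, `C(n,k) = 0` and the second product has the factor `j = n`), so the
second sum may be extended to `k < p` and the sums compared termwise by the ultrametric inequality.
-/

open Finset Nat

theorem Nat.centralBinom_mul_factorial_s8 (k : ℕ) :
    k.centralBinom * k ! = 2 ^ k * ∏ j ∈ range k, (2 * j + 1) := by
  induction k with
  | zero => simp
  | succ k ih =>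
    calc (k + 1).centralBinom * (k + 1)! = (k + 1) * (k + 1).centralBinom * k ! := by
          rw [factorial_succ]; ring
      _ = 2 * (2 * k + 1) * (k.centralBinom * k !) := by
          rw [succ_mul_centralBinom_succ]; ring
      _ = 2 ^ (k + 1) * ∏ j ∈ range (k + 1), (2 * j + 1) := by
          rw [ih, prod_range_succ]; ring

theorem four_pow_mul_factorial_sq_mul_choose_mul_choose (n k : ℕ) :
    (4 : ℤ) ^ k * (k ! : ℤ) ^ 2 * n.choose k * (n + k).choose k =
      ∏ j ∈ range k, ((2 * n + 1 : ℤ) ^ 2 - (2 * j + 1) ^ 2) := by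
  have hdesc : (k ! * n.choose k : ℤ) = ∏ j ∈ range k, ((n : ℤ) - j) := by
    rw [← descPochhammer_eval_eq_prod_range, descPochhammer_eval_eq_descFactorial,
      descFactorial_eq_factorial_mul_choose, cast_mul]
  have hasc : (k ! * (n + k).choose k : ℤ) = ∏ j ∈ range k, ((n : ℤ) + 1 + j) := by
    rw [← cast_mul, ← ascFactorial_eq_factorial_mul_choose, ascFactorial_eq_prod_range]
    push_cast; rfl
  calc (4 : ℤ) ^ k * (k ! : ℤ) ^ 2 * n.choose k * (n + k).choose k
      = (∏ _j ∈ range k, (4 : ℤ)) * (k ! * n.choose k : ℤ) * (k ! * (n + k).choose k : ℤ) := by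
        rw [prod_const, card_range]; ring
    _ = ∏ j ∈ range k, ((2 * n + 1 : ℤ) ^ 2 - (2 * j + 1) ^ 2) := by
        rw [hdesc, hasc, ← prod_mul_distrib, ← prod_mul_distrib]
        exact prod_congr rfl fun j _ => by ring

theorem sq_dvd_factorial_sq_mul_centralBinom_sq_sub (n k : ℕ) :
    (2 * n + 1 : ℤ) ^ 2 ∣
      (k ! : ℤ) ^ 2 * ((k.centralBinom : ℤ) ^ 2 - (-16) ^ k * n.choose k * (n + k).choose k) := by
  have hcentral : (k.centralBinom * k ! : ℤ) = 2 ^ k * ∏ j ∈ range k, (2 * (j : ℤ) + 1) := by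
    exact_mod_cast centralBinom_mul_factorial_s8 k
  have h16 : (-16 : ℤ) ^ k = (-1) ^ k * 4 ^ k * 2 ^ k * 2 ^ k := by
    rw [← mul_pow, ← mul_pow, ← mul_pow]; norm_num
  have hsplit : (k ! : ℤ) ^ 2 * ((k.centralBinom : ℤ) ^ 2 - (-16) ^ k * n.choose k * (n + k).choose k)
      = 4 ^ k * (∏ j ∈ range k, (2 * (j : ℤ) + 1) ^ 2 -
          ∏ j ∈ range k, -((2 * n + 1 : ℤ) ^ 2 - (2 * j + 1) ^ 2)) := by
    rw [prod_pow, prod_neg, card_range, ← four_pow_mul_factorial_sq_mul_choose_mul_choose, h16, show (4 : ℤ) ^ k = 2 ^ k * 2 ^ k by rw [← mul_pow]; norm_num]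
    linear_combination (k.centralBinom * k ! + 2 ^ k * ∏ j ∈ range k, (2 * (j : ℤ) + 1) : ℤ) * hcentral
  rw [hsplit]
  refine dvd_mul_of_dvd_right (Int.ModEq.dvd (Int.ModEq.prod fun j _ => ?_)) _
  exact Int.modEq_iff_dvd.mpr ⟨1, by ring⟩

theorem Padic.norm_centralBinom_sq_sub_le {p : ℕ} [Fact p.Prime] {n k : ℕ} (hp : p = 2 * n + 1)
    (hk : k < p) :
    ‖(((k.centralBinom : ℤ) ^ 2 - (-16) ^ k * n.choose k * (n + k).choose k : ℤ) : ℚ_[p])‖ ≤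
      (p : ℝ) ^ (-2 : ℤ) := by
  have hprime : p.Prime := Fact.out
  have hcoprime : IsCoprime ((p : ℤ) ^ 2) ((k ! : ℤ) ^ 2) := by
    have hp_not_dvd : ¬p ∣ k ! := fun h => (hprime.dvd_factorial.mp h).not_gt hk
    exact_mod_cast Nat.isCoprime_iff_coprime.mpr
      ((hprime.coprime_iff_not_dvd.mpr hp_not_dvd).pow 2 2)
  have hdvd := sq_dvd_factorial_sq_mul_centralBinom_sq_sub n k
  rw [show (2 * n + 1 : ℤ) = p by rw [hp]; push_cast; ring] at hdvd
  exact (norm_int_le_pow_iff_dvd _ 2).mpr (hcoprime.dvd_of_dvd_mul_left hdvd)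

theorem stmt_8 (p : ℕ) [Fact p.Prime] (hodd : Odd p) (a : ℕ → ℤ_[p]) :
    ‖(∑ k ∈ Finset.range p,
          ((2 * k).choose k : ℚ_[p]) ^ 2 * (a k : ℚ_[p]) / 16 ^ k) -
        ∑ k ∈ Finset.range ((p - 1) / 2 + 1),
          (-1) ^ k * (a k : ℚ_[p]) * (((p - 1) / 2).choose k) *
            (((p - 1) / 2 + k).choose k)‖ ≤ (p : ℝ) ^ (-2 : ℤ) := by
  obtain ⟨n, hn⟩ := id hodd
  have hhalf : (p - 1) / 2 = n := by omega
  have h16 : ‖(16 : ℚ_[p])‖ = 1 := by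
    rw [← Nat.cast_ofNat, Padic.norm_natCast_eq_one_iff]
    exact Nat.Coprime.pow_right 4 hodd.coprime_two_right
  have hsum : ∑ k ∈ range (n + 1), (-1) ^ k * (a k : ℚ_[p]) * (n.choose k) * ((n + k).choose k) =
      ∑ k ∈ range p, (-1) ^ k * (a k : ℚ_[p]) * (n.choose k) * ((n + k).choose k) := by
    refine sum_subset (range_subset_range.mpr (by omega)) fun k _ hk => ?_
    rw [choose_eq_zero_of_lt (n := n) (by simpa using hk)]
    simp
  rw [hhalf, hsum, ← sum_sub_distrib]
  refine IsUltrametricDist.norm_sum_le_of_forall_le_of_nonneg (by positivity) fun k hk => ?_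
  set m : ℤ := (k.centralBinom : ℤ) ^ 2 - (-16) ^ k * n.choose k * (n + k).choose k with hm
  have hterm : ((2 * k).choose k : ℚ_[p]) ^ 2 * (a k : ℚ_[p]) / 16 ^ k -
      (-1) ^ k * (a k : ℚ_[p]) * (n.choose k) * ((n + k).choose k) = a k * (m : ℚ_[p]) / 16 ^ k := by
    rw [hm]
    push_cast
    rw [centralBinom_eq_two_mul_choose, neg_pow (16 : ℚ_[p])]
    field_simp
  calc _ = ‖(a k : ℚ_[p])‖ * ‖(m : ℚ_[p])‖ := by
        rw [hterm, norm_div, norm_mul, norm_pow, h16, one_pow, div_one]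
    _ ≤ 1 * (p : ℝ) ^ (-2 : ℤ) :=
        mul_le_mul (PadicInt.norm_le_one _) (Padic.norm_centralBinom_sq_sub_le hn (mem_range.mp hk))
          (norm_nonneg _) zero_le_one
    _ = _ := one_mul _
end

section
/- For any prime p > 3, ∑_{k=0}^{p-1} C(2k,k)^2 / 16^k ≡ (-1)^{(p-1)/2} (mod p^2), i.e., the sum is congruent to the Legendre symbol (-1/p) modulo p^2. -/
def pcong (p k : ℕ) (a b : ℚ) : Prop := ∃ c : ℚ, ¬ p ∣ c.den ∧ a - b = (p : ℚ) ^ k * c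

/-!
Put `m = (p - 1) / 2` and work in `ZMod (p ^ 2)`, where `w = (-4)⁻¹` exists. With `x = -1/2`,
`a k = C(2k, k) w^k` satisfies `k! a k = x (x - 1) ⋯ (x - k + 1)`, i.e. `a k` is "`x` choose `k`".
Since `x ≡ m (mod p)`, `a k ≡ C(m, k) ≡ a (m - k) (mod p)`, so `(a k - a (m - k))² ≡ 0 (mod p²)`,
whence `∑_{k ≤ m} a k² ≡ ∑_{k ≤ m} a k a (m - k)`. By Chu–Vandermonde the latter sum is
"`2x = -1` choose `m`", namely `(-1)^m`. For `m < k < p` the prime `p` divides `C(2k, k)`, so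
these terms vanish modulo `p²`.
-/

open Finset Polynomial Nat

section CommRing
variable {R : Type*} [CommRing R]

lemma descPochhammer_smeval_eq_eval (n : ℕ) (x : R) :
    (descPochhammer ℤ n).smeval x = (descPochhammer R n).eval x := by
  rw [← descPochhammer_map (Int.castRingHom R), eval_map, ← algebraMap_int_eq, ← aeval_def,
    aeval_eq_smeval]

lemma descPochhammer_eval_add (x y : R) (n : ℕ) :
    (descPochhammer R n).eval (x + y) = ∑ k ∈ range (n + 1),
      n.choose k * ((descPochhammer R k).eval x * (descPochhammer R (n - k)).eval y) := by
  simp only [← descPochhammer_smeval_eq_eval]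
  rw [Ring.descPochhammer_smeval_add n (Commute.all x y), Nat.sum_antidiagonal_eq_sum_range_succ_mk]

lemma descPochhammer_eval_neg_one (n : ℕ) :
    (descPochhammer R n).eval (-1) = (-1) ^ n * n ! := by
  induction n with
  | zero => simp
  | succ n ih =>
    rw [descPochhammer_succ_eval, ih, factorial_succ, pow_succ]
    push_cast
    ring

lemma neg_four_pow_mul_descPochhammer_eval {x : R} (hx : 2 * x + 1 = 0) (n : ℕ) :
    (-4) ^ n * (descPochhammer R n).eval x = n ! * centralBinom n := by
  induction n with
  | zero => simp
  | succ n ih =>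
    have h := congrArg (Nat.cast : ℕ → R) (succ_mul_centralBinom_succ n)
    push_cast at h
    rw [descPochhammer_succ_eval, factorial_succ]
    push_cast
    linear_combination (-4 * (x - n)) * ih - (n ! : R) * h - 2 * (n ! * centralBinom n : R) * hx

lemma sum_sq_eq_sum_mul_reflect_of_sq_sub_eq_zero (h2 : IsUnit (2 : R)) (a : ℕ → R) (m : ℕ)
    (h : ∀ k ≤ m, (a k - a (m - k)) ^ 2 = 0) :
    ∑ k ∈ range (m + 1), a k ^ 2 = ∑ k ∈ range (m + 1), a k * a (m - k) := by
  have hrefl : ∑ k ∈ range (m + 1), a (m - k) ^ 2 = ∑ k ∈ range (m + 1), a k ^ 2 :=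
    sum_range_reflect (fun k => a k ^ 2) (m + 1)
  have : 2 * (∑ k ∈ range (m + 1), a k ^ 2 - ∑ k ∈ range (m + 1), a k * a (m - k)) = 0 := by
    calc _ = ∑ k ∈ range (m + 1), (a k - a (m - k)) ^ 2 := by
          simp only [sub_sq, mul_assoc, sum_add_distrib, sum_sub_distrib, hrefl, ← mul_sum]
          ring
      _ = 0 := sum_eq_zero fun k hk => h k (Nat.le_of_lt_succ (mem_range.mp hk))
  exact sub_eq_zero.mp ((h2.mul_right_eq_zero).mp this)

end CommRing

theorem sum_range_succ_centralBinom_mul_pow_sq {R : Type*} [CommRing R] {m : ℕ} {w : R}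
    (hw : -4 * w = 1) (hp : ((2 * m + 1 : ℕ) : R) ^ 2 = 0) (hm : IsUnit (m ! : R)) :
    ∑ k ∈ range (m + 1), ((centralBinom k : R) * w ^ k) ^ 2 = (-1) ^ m := by
  set a : ℕ → R := fun k => centralBinom k * w ^ k
  set x : R := 2 * w
  have hx : 2 * x + 1 = 0 := by linear_combination -hw
  have hfac : ∀ k ≤ m, IsUnit (k ! : R) := fun k hk =>
    isUnit_of_dvd_unit (Nat.cast_dvd_cast (factorial_dvd_factorial hk)) hm
  have hdesc (k : ℕ) : (k ! : R) * a k = (descPochhammer R k).eval x := by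
    have hwk : (-4) ^ k * w ^ k = (1 : R) := by rw [← mul_pow, hw, one_pow]
    linear_combination (-w ^ k) * neg_four_pow_mul_descPochhammer_eval hx k
      + (descPochhammer R k).eval x * hwk
  have hxm : ∀ k ≤ m, ((2 * m + 1 : ℕ) : R) ∣ a k - m.choose k := by
    intro k hk
    -- `x - m = p * x`, as `x = -1/2` and `m = (p - 1)/2`
    have hpx : ((2 * m + 1 : ℕ) : R) ∣ x - m :=
      ⟨x, by push_cast; linear_combination (m : R) * hw⟩
    have hkm : (k ! : R) * (a k - m.choose k) =
        (descPochhammer R k).eval x - (descPochhammer R k).eval (m : R) := by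
      rw [descPochhammer_eval_eq_descFactorial, descFactorial_eq_factorial_mul_choose, mul_sub,
        hdesc]
      push_cast
      ring
    rw [← (hfac k hk).dvd_mul_left, hkm]
    exact hpx.trans (sub_dvd_eval_sub _ _ _)
  have hsq : ∀ k ≤ m, (a k - a (m - k)) ^ 2 = 0 := by
    intro k hk
    have : ((2 * m + 1 : ℕ) : R) ∣ a k - a (m - k) := by
      simpa [choose_symm hk] using dvd_sub (hxm k hk) (hxm (m - k) (m.sub_le k))
    have := pow_dvd_pow_of_dvd this 2
    rwa [hp, zero_dvd_iff] at this
  have h2 : IsUnit (2 : R) := IsUnit.of_mul_eq_one (-2 * w) (by linear_combination hw)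
  have hvand : (m ! : R) * ∑ k ∈ range (m + 1), a k * a (m - k) = m ! * (-1) ^ m := by
    have h := descPochhammer_eval_add x x m
    rw [show x + x = -1 by linear_combination hx, descPochhammer_eval_neg_one] at h
    rw [mul_comm _ ((-1 : R) ^ m), h, mul_sum]
    refine sum_congr rfl fun k hk => ?_
    have hk : k ≤ m := Nat.le_of_lt_succ (mem_range.mp hk)
    rw [← hdesc, ← hdesc, ← choose_mul_factorial_mul_factorial hk]
    push_cast
    ring
  rw [sum_sq_eq_sum_mul_reflect_of_sq_sub_eq_zero h2 a m hsq]
  exact hm.mul_left_cancel hvand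

theorem ZMod.sum_range_centralBinom_mul_pow_sq {p : ℕ} (hp : p.Prime) (hp2 : p ≠ 2)
    {w : ZMod (p ^ 2)} (hw : -4 * w = 1) :
    ∑ k ∈ range p, ((centralBinom k : ZMod (p ^ 2)) * w ^ k) ^ 2 = (-1) ^ ((p - 1) / 2) := by
  obtain ⟨m, rfl⟩ := hp.odd_of_ne_two hp2
  have hpm : ((2 * m + 1 : ℕ) : ZMod ((2 * m + 1) ^ 2)) ^ 2 = 0 := by
    rw [← Nat.cast_pow, ZMod.natCast_self]
  have hm : IsUnit (m ! : ZMod ((2 * m + 1) ^ 2)) := by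
    rw [ZMod.isUnit_iff_coprime]
    exact (Nat.Coprime.pow_right 2 ((hp.coprime_iff_not_dvd.mpr
      fun h => by have := hp.dvd_factorial.mp h; omega).symm))
  have htail : ∀ k ∈ Ico (m + 1) (2 * m + 1),
      ((centralBinom k : ZMod ((2 * m + 1) ^ 2)) * w ^ k) ^ 2 = 0 := by
    intro k hk
    obtain ⟨hk1, hk2⟩ := mem_Ico.mp hk
    have hdvd : 2 * m + 1 ∣ centralBinom k :=
      hp.dvd_choose hk2 (by omega) (by omega)
    rw [mul_pow, ← Nat.cast_pow, (ZMod.natCast_eq_zero_iff _ _).mpr (pow_dvd_pow_of_dvd hdvd 2),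
      zero_mul]
  rw [← sum_range_add_sum_Ico _ (by omega : m + 1 ≤ 2 * m + 1), sum_eq_zero htail, add_zero,
    sum_range_succ_centralBinom_mul_pow_sq hw hpm hm, show (2 * m + 1 - 1) / 2 = m by omega]

lemma pcong_of_sub_mul_eq_intCast {p k d : ℕ} {a b : ℚ} {N : ℤ} (hd : ¬ p ∣ d)
    (h : (a - b) * d = N) (hN : (N : ZMod (p ^ k)) = 0) : pcong p k a b := by
  obtain ⟨t, rfl⟩ := (ZMod.intCast_zmod_eq_zero_iff_dvd N (p ^ k)).mp hN
  have hd0 : (d : ℚ) ≠ 0 := Nat.cast_ne_zero.mpr (by rintro rfl; exact hd (dvd_zero p))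
  refine ⟨t / d, fun hden => hd ?_, ?_⟩
  · have := Rat.den_dvd t d
    rw [Rat.divInt_eq_div] at this
    push_cast at this
    exact Int.natCast_dvd_natCast.mp ((Int.natCast_dvd_natCast.mpr hden).trans this)
  · field_simp
    push_cast at h
    linear_combination h

theorem stmt_9 (p : ℕ) (hp : p.Prime) (hp3 : 3 < p) :
    pcong p 2 (∑ k ∈ Finset.range p, ((2 * k).choose k : ℚ) ^ 2 / 16 ^ k)
      ((-1) ^ ((p - 1) / 2)) := by
  have h2p : Nat.Coprime 2 p := (Nat.coprime_primes prime_two hp).mpr (by omega)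
  obtain ⟨w, hw⟩ : ∃ w : ZMod (p ^ 2), -4 * w = 1 := by
    have h4 : IsUnit ((4 : ℕ) : ZMod (p ^ 2)) :=
      (ZMod.isUnit_iff_coprime _ _).mpr ((h2p.pow 2 2 : Nat.Coprime 4 (p ^ 2)))
    exact_mod_cast h4.neg.exists_right_inv
  have hw2 : (16 : ZMod (p ^ 2)) * w ^ 2 = 1 := by linear_combination (-4 * w + 1) * hw
  refine pcong_of_sub_mul_eq_intCast (d := 16 ^ (p - 1))
    (N := ∑ k ∈ range p, (centralBinom k : ℤ) ^ 2 * 16 ^ (p - 1 - k)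
      - (-1) ^ ((p - 1) / 2) * 16 ^ (p - 1)) ?_ ?_ ?_
  · rw [← hp.coprime_iff_not_dvd]
    exact (h2p.symm.pow_right 4 : Nat.Coprime p 16).pow_right _
  · push_cast
    rw [sub_mul, sum_mul]
    congr 1
    refine sum_congr rfl fun k hk => ?_
    rw [← pow_sub_mul_pow (16 : ℚ) (by have := mem_range.mp hk; omega : k ≤ p - 1),
      centralBinom_eq_two_mul_choose]
    field_simp
  · push_cast
    rw [← ZMod.sum_range_centralBinom_mul_pow_sq hp (by omega) hw, sum_mul, ← sum_sub_distrib]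
    refine sum_eq_zero fun k hk => ?_
    rw [← pow_sub_mul_pow (16 : ZMod (p ^ 2)) (by have := mem_range.mp hk; omega : k ≤ p - 1)]
    have h16 : (16 : ZMod (p ^ 2)) ^ k * (w ^ k) ^ 2 = 1 := by rw [← one_pow k, ← hw2]; ring
    linear_combination (-(centralBinom k : ZMod (p ^ 2)) ^ 2 * 16 ^ (p - 1 - k)) * h16
end

section
/- For any prime p > 3, C(ap, bp) ≡ C(a,b) (mod p^3) for all nonnegative integers a ≥ b (Wolstenholme / Ljunggren congruence). -/
/-!
Put `P j = ∏_{i=1}^{p-1} (j p + i)`. Since `(n p)! = p ^ n * n! * ∏_{j<n} P j`, dividing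
`(a p)! = C(a p, b p) (b p)! ((a - b) p)!` by `a! = C(a, b) b! (a - b)!` leaves
`C(a p, b p) ∏_{j<b} P j ∏_{j<a-b} P j = C(a, b) ∏_{j<a} P j`,
so it suffices that `P j ≡ (p - 1)! (mod p³)`, a unit.

Pairing `i` with `p - i` gives `(P j)² = ∏_i (i (p - i) + p² j (j + 1))`. As `(p²)² ≡ 0`, this is
`((p - 1)!)² (1 + p² j (j + 1) ∑_i 1 / (i (p - i)))`, and
`∑_i 1 / (i (p - i)) ≡ -∑_i 1 / i² ≡ 0 (mod p)` for `p > 3`. Hence `(P j)² ≡ ((p - 1)!)² (mod p³)`,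
and since `P j ≡ (p - 1)! (mod p)` with `p` odd,
`P j + (p - 1)!` is a unit, so `P j ≡ (p - 1)! (mod p³)`.
-/

open Finset Nat

theorem Finset.prod_add_of_sq_eq_zero {ι R : Type*} [CommRing R] [DecidableEq ι]
    (s : Finset ι) (u : ι → R) {c : R} (hc : c ^ 2 = 0) :
    ∏ i ∈ s, (u i + c) = ∏ i ∈ s, u i + c * ∑ k ∈ s, ∏ i ∈ s.erase k, u i := by
  induction s using Finset.induction with
  | empty => simp
  | @insert a s ha ih =>
    have herase : ∀ k ∈ s, ∏ i ∈ (insert a s).erase k, u i = u a * ∏ i ∈ s.erase k, u i := by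
      intro k hk
      rw [erase_insert_of_ne (ne_of_mem_of_not_mem hk ha).symm, prod_insert (by simp [ha])]
    rw [prod_insert ha, prod_insert ha, sum_insert ha, erase_insert ha, sum_congr rfl herase,
      ← mul_sum, ih]
    linear_combination (∑ k ∈ s, ∏ i ∈ s.erase k, u i) * hc

theorem Finset.sum_prod_erase_eq_prod_mul_sum_inv {ι K : Type*} [Semifield K] [DecidableEq ι]
    (s : Finset ι) (u : ι → K) (hu : ∀ i ∈ s, u i ≠ 0) :
    ∑ k ∈ s, ∏ i ∈ s.erase k, u i = (∏ i ∈ s, u i) * ∑ k ∈ s, (u k)⁻¹ := by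
  rw [mul_sum]
  exact sum_congr rfl fun k hk => (eq_mul_inv_iff_mul_eq₀ (hu k hk)).mpr (prod_erase_mul _ _ hk)

theorem Finset.sq_prod_Ico_add {R : Type*} [CommRing R] (n : ℕ) (x : R) :
    (∏ i ∈ Ico 1 n, (x + i)) ^ 2 = ∏ i ∈ Ico 1 n, (((i * (n - i) : ℕ) : R) + x * (x + n)) := by
  have hreflect : ∏ i ∈ Ico 1 n, (x + (n - i : ℕ)) = ∏ i ∈ Ico 1 n, (x + i) := by
    rw [prod_Ico_reflect (fun i => x + (i : R)) 1 (Nat.le_succ n)]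
    simp
  rw [sq]
  nth_rewrite 2 [← hreflect]
  rw [← prod_mul_distrib]
  refine prod_congr rfl fun i hi => ?_
  rw [Nat.cast_mul, Nat.cast_sub (mem_Ico.mp hi).2.le]
  ring

theorem eq_of_sq_eq_sq_of_isNilpotent_sub {R : Type*} [CommRing R] {x y : R}
    (h : x ^ 2 = y ^ 2) (hy : IsUnit (2 * y)) (hxy : IsNilpotent (x - y)) : x = y := by
  have hunit : IsUnit (x + y) := by
    simpa [two_mul, add_comm] using hxy.isUnit_add_left_of_commute hy (Commute.all _ _)
  have : (x - y) * (x + y) = 0 := by linear_combination h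
  exact sub_eq_zero.mp (hunit.mul_left_eq_zero.mp this)

theorem ZMod.sum_range_natCast {M : Type*} [AddCommMonoid M] (n : ℕ) [NeZero n]
    (f : ZMod n → M) : ∑ i ∈ range n, f i = ∑ x : ZMod n, f x := by
  obtain ⟨m, rfl⟩ : ∃ m, n = m + 1 := Nat.exists_eq_add_one.mpr (NeZero.pos n)
  rw [← Fin.sum_univ_eq_sum_range]
  exact Fintype.sum_congr _ _ fun i => congrArg f (ZMod.natCast_zmod_val (n := m + 1) i)

theorem ZMod.sum_Ico_inv_sq_eq_zero {p : ℕ} [Fact p.Prime] (hp3 : 3 < p) :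
    ∑ i ∈ Ico 1 p, ((i : ZMod p) ^ 2)⁻¹ = 0 := by
  have hsq : ∑ x : ZMod p, x ^ 2 = 0 :=
    FiniteField.sum_pow_lt_card_sub_one (ZMod p) 2 (by rw [ZMod.card]; omega)
  rw [← Equiv.sum_comp (Equiv.inv (ZMod p)), ← ZMod.sum_range_natCast, range_eq_Ico,
    sum_eq_sum_Ico_succ_bot (Fact.out : p.Prime).pos] at hsq
  simpa [inv_pow] using hsq

theorem ZMod.sum_prod_erase_mul_sub_eq_zero {p : ℕ} [Fact p.Prime] (hp3 : 3 < p) :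
    ∑ k ∈ Ico 1 p, ∏ i ∈ (Ico 1 p).erase k, ((i * (p - i) : ℕ) : ZMod p) = 0 := by
  have hu : ∀ i ∈ Ico 1 p, ((i * (p - i) : ℕ) : ZMod p) = -(i : ZMod p) ^ 2 := by
    intro i hi
    rw [Nat.cast_mul, Nat.cast_sub (mem_Ico.mp hi).2.le, ZMod.natCast_self]
    ring
  have hi0 : ∀ i ∈ Ico 1 p, (i : ZMod p) ≠ 0 := by
    intro i hi
    rw [Ne, ZMod.natCast_eq_zero_iff]
    exact Nat.not_dvd_of_pos_of_lt (mem_Ico.mp hi).1 (mem_Ico.mp hi).2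
  rw [sum_prod_erase_eq_prod_mul_sum_inv _ _ fun i hi => by simp [hu i hi, hi0 i hi],
    sum_congr rfl fun i hi => by rw [hu i hi, inv_neg], sum_neg_distrib,
    ZMod.sum_Ico_inv_sq_eq_zero hp3, neg_zero, mul_zero]

theorem ZMod.exists_eq_mul_of_castHom_eq_zero {p k : ℕ} (hk : k ≠ 0) {x : ZMod (p ^ k)}
    (hx : ZMod.castHom (dvd_pow_self p hk) (ZMod p) x = 0) : ∃ y, x = p * y := by
  rw [ZMod.castHom_apply, ← ZMod.intCast_cast, ZMod.intCast_zmod_eq_zero_iff_dvd] at hx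
  obtain ⟨m, hm⟩ := hx
  exact ⟨m, by rw [← ZMod.intCast_zmod_cast x, hm]; push_cast; ring⟩

theorem isUnit_two_mul_factorial_pred {p : ℕ} (hp : p.Prime) (hp2 : p ≠ 2) (k : ℕ) :
    IsUnit (2 * (p - 1)! : ZMod (p ^ k)) := by
  have hndvd : ¬ p ∣ 2 * (p - 1)! := by
    rw [hp.dvd_mul, hp.dvd_factorial, Nat.prime_dvd_prime_iff_eq hp Nat.prime_two]
    have := hp.pos
    omega
  have := (ZMod.isUnit_iff_coprime _ (p ^ k)).mpr
    ((Nat.coprime_comm.mp (hp.coprime_iff_not_dvd.mpr hndvd)).pow_right k)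
  simpa using this

theorem prod_Ico_mul_add_eq_factorial_pred {p : ℕ} [Fact p.Prime] (hp3 : 3 < p) (j : ℕ) :
    ∏ i ∈ Ico 1 p, ((j * p + i : ℕ) : ZMod (p ^ 3)) = ((p - 1)! : ZMod (p ^ 3)) := by
  have hp : p.Prime := Fact.out
  have hp3zero : (p : ZMod (p ^ 3)) ^ 3 = 0 := by exact_mod_cast ZMod.natCast_self (p ^ 3)
  set P := ∏ i ∈ Ico 1 p, ((j * p + i : ℕ) : ZMod (p ^ 3))
  set w := ((p - 1)! : ZMod (p ^ 3))
  set u : ℕ → ZMod (p ^ 3) := fun i => ((i * (p - i) : ℕ) : ZMod (p ^ 3))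
  have hfact : ∏ i ∈ Ico 1 p, (i : ZMod (p ^ 3)) = w := by
    have := prod_Ico_id_eq_factorial (p - 1)
    rw [Nat.sub_add_cancel hp.one_le] at this
    rw [← Nat.cast_prod, this]
  have hw : w ^ 2 = ∏ i ∈ Ico 1 p, u i := by
    simpa only [hfact, zero_add, zero_mul, add_zero] using sq_prod_Ico_add p (0 : ZMod (p ^ 3))
  have hP : P ^ 2 = ∏ i ∈ Ico 1 p, (u i + p ^ 2 * (j * (j + 1))) := by
    simp only [P, Nat.cast_add]
    rw [sq_prod_Ico_add]
    refine prod_congr rfl fun i _ => ?_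
    simp only [u]
    push_cast
    ring
  obtain ⟨y, hy⟩ : ∃ y, ∑ k ∈ Ico 1 p, ∏ i ∈ (Ico 1 p).erase k, u i = p * y := by
    refine ZMod.exists_eq_mul_of_castHom_eq_zero three_ne_zero ?_
    simp only [u, map_sum, map_prod, map_natCast]
    exact ZMod.sum_prod_erase_mul_sub_eq_zero hp3
  have hsq : P ^ 2 = w ^ 2 := by
    have hc : ((p : ZMod (p ^ 3)) ^ 2 * (j * (j + 1))) ^ 2 = 0 := by
      linear_combination (p : ZMod (p ^ 3)) * (j * (j + 1)) ^ 2 * hp3zero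
    rw [hP, prod_add_of_sq_eq_zero _ _ hc, hy, hw]
    linear_combination (j * (j + 1) * y) * hp3zero
  have hnil : IsNilpotent (P - w) := by
    obtain ⟨z, hz⟩ : ∃ z, P - w = p * z := by
      refine ZMod.exists_eq_mul_of_castHom_eq_zero three_ne_zero ?_
      rw [map_sub, sub_eq_zero, ← hfact]
      simp [P, map_prod]
    exact ⟨3, by rw [hz]; linear_combination z ^ 3 * hp3zero⟩
  exact eq_of_sq_eq_sq_of_isNilpotent_sub hsq (isUnit_two_mul_factorial_pred hp (by omega) 3) hnil

/-- `(n p)!` with the multiples of `p` removed. -/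
def factorialCoprime (p n : ℕ) : ℕ := ∏ j ∈ range n, ∏ i ∈ Ico 1 p, (j * p + i)

theorem factorialCoprime_succ (p n : ℕ) :
    factorialCoprime p (n + 1) = factorialCoprime p n * ∏ i ∈ Ico 1 p, (n * p + i) :=
  prod_range_succ _ _

theorem factorial_add_eq_mul_prod_Ico (m k : ℕ) :
    (m + k)! = m ! * ∏ i ∈ Ico 1 (k + 1), (m + i) := by
  rw [← factorial_mul_ascFactorial, ascFactorial_eq_prod_range, prod_Ico_eq_prod_range,
    Nat.add_sub_cancel]
  simp only [add_assoc, add_comm 1]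

theorem factorial_mul_eq {p : ℕ} (hp : 0 < p) (n : ℕ) :
    (n * p)! = p ^ n * n ! * factorialCoprime p n := by
  induction n with
  | zero => simp [factorialCoprime]
  | succ n ih =>
    rw [add_one_mul, factorial_add_eq_mul_prod_Ico, prod_Ico_succ_top (by omega), ih,
      factorialCoprime_succ, factorial_succ]
    ring

theorem choose_mul_mul_factorialCoprime {p a b : ℕ} (hp : 0 < p) (hab : b ≤ a) :
    (a * p).choose (b * p) * (factorialCoprime p b * factorialCoprime p (a - b)) =
      a.choose b * factorialCoprime p a := by
  have hpos : 0 < p ^ a * b ! * (a - b)! := by positivity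
  refine Nat.eq_of_mul_eq_mul_left hpos ?_
  have hchoose := choose_mul_factorial_mul_factorial (Nat.mul_le_mul_right p hab)
  rw [← Nat.sub_mul, factorial_mul_eq hp, factorial_mul_eq hp, factorial_mul_eq hp,
    ← choose_mul_factorial_mul_factorial hab] at hchoose
  have hpow : p ^ a = p ^ b * p ^ (a - b) := by rw [← pow_add, Nat.add_sub_cancel' hab]
  rw [hpow] at hchoose ⊢
  linear_combination hchoose

theorem natCast_factorialCoprime {p : ℕ} [Fact p.Prime] (hp3 : 3 < p) (n : ℕ) :
    (factorialCoprime p n : ZMod (p ^ 3)) = ((p - 1)! : ZMod (p ^ 3)) ^ n := by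
  simp only [factorialCoprime, Nat.cast_prod, prod_Ico_mul_add_eq_factorial_pred hp3, prod_const,
    card_range]

theorem stmt_12 (p : ℕ) (hp : p.Prime) (hp3 : 3 < p) (a b : ℕ) (hab : b ≤ a) :
    (((a * p).choose (b * p) : ℤ)) ≡ (a.choose b : ℤ) [ZMOD (p : ℤ) ^ 3] := by
  have := Fact.mk hp
  have hunit : IsUnit ((p - 1)! : ZMod (p ^ 3)) :=
    isUnit_of_mul_isUnit_right (isUnit_two_mul_factorial_pred hp (by omega) 3)
  have hcast := congrArg (Nat.cast : ℕ → ZMod (p ^ 3)) (choose_mul_mul_factorialCoprime hp.pos hab)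
  simp only [Nat.cast_mul, natCast_factorialCoprime hp3, ← pow_add, Nat.add_sub_cancel' hab]
    at hcast
  have hmod := (ZMod.natCast_eq_natCast_iff _ _ _).mp ((hunit.pow a).mul_left_inj.mp hcast)
  exact_mod_cast Int.natCast_modEq_iff.mpr hmod
end
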